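/- arXiv:2111.12070 — 4 statements merged into one kernel-verified Lean document; each statement's English description precedes it below -/
import Mathlib

section
/- Let S = ⟨a_1,…,a_n⟩ ⊆ ℕ^d be an affine semigroup and let f, f' ∈ PF(S) with f + f' ∉ S. Let M = (m_{ij}) be a row-factorization matrix of f and M' = (m'_{ij}) a row-factorization matrix of f'. Then for every pair i ≠ j, either m_{ij} = 0 or m'_{ji} = 0. -/
open Finset BigOperators

/-! Basic notions for affine semigroups in `ℕ^d`, following
"Affine semigroups of maximal projective dimension". -/

def natToQ {d : ℕ} (x : Fin d → ℕ) : Fin d → ℚ := fun i => (x i : ℚ)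

def natToZ {d : ℕ} (x : Fin d → ℕ) : Fin d → ℤ := fun i => (x i : ℤ)

/-- The rational cone spanned by an affine semigroup `S ⊆ ℕ^d`: the set of
nonnegative rational combinations of elements of `S` (equivalently, of any
generating set of `S`). -/
def cone {d : ℕ} (S : AddSubmonoid (Fin d → ℕ)) : Set (Fin d → ℚ) :=
  { q | ∃ (m : ℕ) (lam : Fin m → ℚ) (s : Fin m → Fin d → ℕ),
      (∀ i, 0 ≤ lam i) ∧ (∀ i, s i ∈ S) ∧ q = ∑ i, lam i • natToQ (s i) }

/-- `H(S) = (cone(S) \ S) ∩ ℕ^d`. -/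
def HSet {d : ℕ} (S : AddSubmonoid (Fin d → ℕ)) : Set (Fin d → ℕ) :=
  { x | natToQ x ∈ cone S ∧ x ∉ S }

/-- The set of pseudo-Frobenius elements of `S`. -/
def PF {d : ℕ} (S : AddSubmonoid (Fin d → ℕ)) : Set (Fin d → ℕ) :=
  { f | f ∈ HSet S ∧ ∀ s ∈ S, s ≠ 0 → f + s ∈ S }

/-- `A` is a minimal generating set of `S`. -/
def IsMinGenSet {d : ℕ} (A : Set (Fin d → ℕ)) (S : AddSubmonoid (Fin d → ℕ)) : Prop :=
  AddSubmonoid.closure A = S ∧ ∀ x ∈ A, x ∉ AddSubmonoid.closure (A \ {x})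

/-- The family `a : Fin n → ℕ^d` is a minimal generating family (the minimal
generating set) of `S`. -/
def MinGen {n d : ℕ} (a : Fin n → Fin d → ℕ) (S : AddSubmonoid (Fin d → ℕ)) : Prop :=
  Function.Injective a ∧ IsMinGenSet (Set.range a) S

/-- `G(S)`: the subgroup of `ℤ^d` generated by `S`. -/
def grpOf {d : ℕ} (S : AddSubmonoid (Fin d → ℕ)) : AddSubgroup (Fin d → ℤ) :=
  AddSubgroup.closure (natToZ '' (S : Set (Fin d → ℕ)))

/-- `S = S₁ +_c S₂` is a gluing of the affine semigroups `S₁` and `S₂`. -/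
structure IsGluing {d : ℕ} (S S₁ S₂ : AddSubmonoid (Fin d → ℕ)) (c : Fin d → ℕ) : Prop where
  exists_partition : ∃ A₁ A₂ : Set (Fin d → ℕ),
    A₁.Finite ∧ A₂.Finite ∧ A₁.Nonempty ∧ A₂.Nonempty ∧ Disjoint A₁ A₂ ∧
    IsMinGenSet (A₁ ∪ A₂) S ∧ S₁ = AddSubmonoid.closure A₁ ∧ S₂ = AddSubmonoid.closure A₂
  mem₁ : c ∈ S₁
  mem₂ : c ∈ S₂
  grp : grpOf S₁ ⊓ grpOf S₂ = AddSubgroup.zmultiples (natToZ c)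

/-- A term order on `ℕ^d`: a total order compatible with addition for which `0`
is the least element. -/
structure TermOrder (d : ℕ) : Type where
  lt : (Fin d → ℕ) → (Fin d → ℕ) → Prop
  irrefl : ∀ x, ¬ lt x x
  trans : ∀ {x y z}, lt x y → lt y z → lt x z
  total : ∀ x y, x = y ∨ lt x y ∨ lt y x
  zero_lt : ∀ x, x ≠ 0 → lt 0 x
  add_compat : ∀ {x y : Fin d → ℕ} (z : Fin d → ℕ), lt x y → lt (x + z) (y + z)

/-- `F` is the Frobenius element `F(S)_≺ = max_≺ H(S)`. -/
def IsFrob {d : ℕ} (τ : TermOrder d) (S : AddSubmonoid (Fin d → ℕ)) (F : Fin d → ℕ) : Prop :=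
  F ∈ HSet S ∧ ∀ x ∈ HSet S, x ≠ F → τ.lt x F

/-- `S` is `≺`-almost symmetric. -/
def AlmostSym {d : ℕ} (τ : TermOrder d) (S : AddSubmonoid (Fin d → ℕ)) : Prop :=
  ∃ F, IsFrob τ S F ∧ ((PF S) \ {F}).Nonempty ∧
    ∀ g ∈ (PF S) \ {F}, ∃ h ∈ (PF S) \ {F}, g + h = F

/-- A row-factorization matrix of `f` relative to the generators `a`. -/
def IsRFMatrix {n d : ℕ} (a : Fin n → Fin d → ℕ) (f : Fin d → ℕ)
    (M : Matrix (Fin n) (Fin n) ℤ) : Prop :=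
  (∀ i, M i i = -1) ∧ (∀ i j, i ≠ j → 0 ≤ M i j) ∧
  (∀ i, ∑ j, M i j • natToZ (a j) = natToZ f)

/-- The monomial `x^u` in `k[x_1,…,x_n]`. -/
noncomputable def mono (k : Type*) [CommRing k] {n : ℕ} (u : Fin n → ℕ) :
    MvPolynomial (Fin n) k :=
  MvPolynomial.monomial (Finsupp.equivFunOnFinite.symm u) 1

/-- The binomial `x^u - x^v`. -/
noncomputable def binom (k : Type*) [CommRing k] {n : ℕ} (u v : Fin n → ℕ) :
    MvPolynomial (Fin n) k :=
  mono k u - mono k v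

/-- The semigroup map `π : k[x_1,…,x_n] → k[t_1,…,t_d]`, `x_i ↦ t^{a_i}`. -/
noncomputable def toricMap (k : Type*) [CommRing k] {n d : ℕ} (a : Fin n → Fin d → ℕ) :
    MvPolynomial (Fin n) k →ₐ[k] MvPolynomial (Fin d) k :=
  MvPolynomial.aeval (fun i => mono k (a i))

/-- The toric ideal `I_S = ker π`. -/
noncomputable def toricIdeal (k : Type*) [CommRing k] {n d : ℕ} (a : Fin n → Fin d → ℕ) :
    Ideal (MvPolynomial (Fin n) k) :=
  RingHom.ker (toricMap k a).toRingHom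

/-- Positive part of an integer vector. -/
def pospart {n : ℕ} (v : Fin n → ℤ) : Fin n → ℕ := fun i => (v i).toNat

/-- Negative part of an integer vector. -/
def negpart {n : ℕ} (v : Fin n → ℤ) : Fin n → ℕ := fun i => (-(v i)).toNat

/-- `p` is an RF-relation: a binomial obtained from the difference of two rows of
some RF-matrix of some pseudo-Frobenius element. -/
def IsRFRelation (k : Type*) [CommRing k] {n d : ℕ} (a : Fin n → Fin d → ℕ)
    (S : AddSubmonoid (Fin d → ℕ)) (p : MvPolynomial (Fin n) k) : Prop :=
  ∃ f ∈ PF S, ∃ M : Matrix (Fin n) (Fin n) ℤ, IsRFMatrix a f M ∧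
    ∃ i j : Fin n, i < j ∧
      p = binom k (pospart fun l => M i l - M j l) (negpart fun l => M i l - M j l)

/-- The toric ideal `I_S` is generic: it is minimally generated by binomials of
full support. -/
def IsGeneric (k : Type*) [CommRing k] {n d : ℕ} (a : Fin n → Fin d → ℕ) : Prop :=
  ∃ G : Finset (MvPolynomial (Fin n) k),
    (∀ g ∈ G, ∃ u v : Fin n → ℕ, g = binom k u v ∧ ∀ l, u l ≠ 0 ∨ v l ≠ 0) ∧
    Ideal.span (G : Set (MvPolynomial (Fin n) k)) = toricIdeal k a ∧
    ∀ G' : Finset (MvPolynomial (Fin n) k), G' ⊂ G →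
      Ideal.span (G' : Set (MvPolynomial (Fin n) k)) ≠ toricIdeal k a

/-- The Apéry set `Ap(S, x) = { y ∈ S : y - x ∈ H(S) }`. -/
def Ap {d : ℕ} (S : AddSubmonoid (Fin d → ℕ)) (x : Fin d → ℕ) : Set (Fin d → ℕ) :=
  { y | y ∈ S ∧ ∃ z ∈ HSet S, y = x + z }

/-- `UF(S)`: elements with a unique factorization in terms of the generators `a`. -/
def UF {n d : ℕ} (a : Fin n → Fin d → ℕ) : Set (Fin d → ℕ) :=
  { x | ∃! u : Fin n → ℕ, x = ∑ l, u l • a l }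

open Classical in
/-- The multivariate Hilbert series `Σ_{a ∈ S} t^a` of `S`. -/
noncomputable def hilbSeries {d : ℕ} (S : AddSubmonoid (Fin d → ℕ)) :
    MvPowerSeries (Fin d) ℤ :=
  fun e => if Finsupp.equivFunOnFinite e ∈ S then 1 else 0

/-- If `f, f' ∈ PF(S)` with `f + f' ∉ S`, then for RF-matrices `M`
of `f` and `M'` of `f'`, for every `i ≠ j`, either `M i j = 0` or `M' j i = 0`. -/
theorem RFMatrix_complementary_zeros {n d : ℕ}
    (S : AddSubmonoid (Fin d → ℕ)) (a : Fin n → Fin d → ℕ) (hmin : MinGen a S)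
    (f f' : Fin d → ℕ) (hf : f ∈ PF S) (hf' : f' ∈ PF S) (hsum : f + f' ∉ S)
    (M M' : Matrix (Fin n) (Fin n) ℤ)
    (hM : IsRFMatrix a f M) (hM' : IsRFMatrix a f' M') :
    ∀ i j : Fin n, i ≠ j → M i j = 0 ∨ M' j i = 0 := by
  intro i j hij
  by_contra hcon
  push_neg at hcon
  obtain ⟨h1, h2⟩ := hcon
  apply hsum
  obtain ⟨hMd, hMnn, hMrow⟩ := hM
  obtain ⟨hM'd, hM'nn, hM'row⟩ := hM'
  set c : Fin n → ℤ := fun l => M i l + M' j l with hc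
  have hcnn : ∀ l, 0 ≤ c l := by
    intro l
    by_cases hli : l = i
    · subst hli
      have hnn := hM'nn j l (Ne.symm hij)
      have := hMd l
      simp only [hc, this]
      omega
    · by_cases hlj : l = j
      · subst hlj
        have hnn := hMnn i l hij
        have := hM'd l
        simp only [hc, this]
        omega
      · have g1 := hMnn i l (fun h => hli h.symm)
        have g2 := hM'nn j l (fun h => hlj h.symm)
        simp only [hc]
        omega
  have hsumeq : ∑ l, c l • natToZ (a l) = natToZ f + natToZ f' := by
    simp only [hc, add_smul]
    rw [Finset.sum_add_distrib, hMrow i, hM'row j]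
  set u : Fin n → ℕ := fun l => (c l).toNat with hu
  have hcast : ∀ l, ((u l : ℤ)) = c l := fun l => Int.toNat_of_nonneg (hcnn l)
  have hkey : f + f' = ∑ l, u l • a l := by
    funext k
    have hZ : ((f k : ℤ)) + (f' k : ℤ) = ∑ l, (u l : ℤ) * (a l k : ℤ) := by
      have := congrFun hsumeq k
      simp only [Finset.sum_apply, Pi.add_apply, Pi.smul_apply, smul_eq_mul,
        natToZ] at this
      rw [← this]
      exact Finset.sum_congr rfl fun l _ => by rw [hcast l]
    have : (((f + f') k : ℤ)) = (((∑ l, u l • a l) k : ℤ)) := by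
      simp only [Pi.add_apply, Finset.sum_apply, Pi.smul_apply, smul_eq_mul]
      push_cast
      exact hZ
    exact_mod_cast this
  rw [hkey]
  have ha : ∀ l, a l ∈ S := by
    intro l
    have := hmin.2.1
    rw [← this]
    exact AddSubmonoid.subset_closure ⟨l, rfl⟩
  exact AddSubmonoid.sum_mem S (fun l _ => AddSubmonoid.nsmul_mem S (ha l) (u l))
end

section
/- Let S = ⟨a_1,…,a_n⟩ ⊆ ℕ^d be an affine semigroup, f ∈ PF(S), and let m_1,…,m_n ∈ ℤ^n be the rows of a row-factorization matrix of f. For 1 ≤ i < j ≤ n set m_{(ij)} = m_i − m_j and write m_{(ij)} = m_{(ij)}⁺ − m_{(ij)}⁻ with m_{(ij)}⁺, m_{(ij)}⁻ ∈ ℕ^n of disjoint support. Then: (1) Σ_{k=1}^n (m_{(ij)}⁺)_k a_k = Σ_{k=1}^n (m_{(ij)}⁻)_k a_k, so the binomial φ_{ij} = x^{m_{(ij)}⁺} − x^{m_{(ij)}⁻} lies in the toric ideal I_S; (2) the S-degree Σ_k (m_{(ij)}⁺)_k a_k of φ_{ij} is componentwise at most f + a_i + a_j; and (3) equality holds if the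 vectors m_i + e_i + e_j and m_j + e_i + e_j have disjoint support, where e_1,…,e_n are the standard unit vectors of ℤ^n. -/
open Finset BigOperators

lemma toricMap_mono (k : Type*) [CommRing k] {n d : ℕ} (a : Fin n → Fin d → ℕ)
    (u : Fin n → ℕ) :
    toricMap k a (mono k u) = mono k (∑ l, u l • a l) := by
  unfold toricMap mono
  rw [MvPolynomial.aeval_monomial, map_one, one_mul, Finsupp.prod_pow]
  have h1 : ∀ l ∈ Finset.univ, (MvPolynomial.monomial (Finsupp.equivFunOnFinite.symm (a l)) (1:k)) ^
      (Finsupp.equivFunOnFinite.symm u) l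
      = MvPolynomial.monomial ((u l) • Finsupp.equivFunOnFinite.symm (a l)) 1 := by
    intro l _
    rw [MvPolynomial.monomial_pow, one_pow]
    rfl
  have h2 : Finsupp.equivFunOnFinite.symm (∑ l, u l • a l)
      = ∑ l, u l • Finsupp.equivFunOnFinite.symm (a l) := by
    ext t
    simp [Finsupp.finset_sum_apply, Finset.sum_apply]
  rw [Finset.prod_congr rfl h1, ← MvPolynomial.monomial_sum_one, h2]


theorem RF_relation_in_toricIdeal (k : Type*) [Field k] {n d : ℕ}
    (S : AddSubmonoid (Fin d → ℕ)) (a : Fin n → Fin d → ℕ) (hmin : MinGen a S)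
    (f : Fin d → ℕ) (hf : f ∈ PF S)
    (M : Matrix (Fin n) (Fin n) ℤ) (hM : IsRFMatrix a f M)
    (i j : Fin n) (hij : i < j) :
    (∑ l, pospart (fun l => M i l - M j l) l • a l =
      ∑ l, negpart (fun l => M i l - M j l) l • a l) ∧
    binom k (pospart fun l => M i l - M j l) (negpart fun l => M i l - M j l) ∈
      toricIdeal k a ∧
    (∀ t, (∑ l, pospart (fun l => M i l - M j l) l • a l) t ≤ (f + a i + a j) t) ∧
    ((∀ l, M i l + (Pi.single i 1 : Fin n → ℤ) l + (Pi.single j 1 : Fin n → ℤ) l = 0 ∨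
        M j l + (Pi.single i 1 : Fin n → ℤ) l + (Pi.single j 1 : Fin n → ℤ) l = 0) →
      ∑ l, pospart (fun l => M i l - M j l) l • a l = f + a i + a j) := by
  classical
  obtain ⟨hdiag, hposM, hrow⟩ := hM
  have hne : i ≠ j := ne_of_lt hij
  set v : Fin n → ℤ := fun l => M i l - M j l with hv
  have hrow' : ∀ (r : Fin n) (t : Fin d), ∑ l, M r l * (a l t : ℤ) = (f t : ℤ) := by
    intro r t
    have h := congrFun (hrow r) t
    simpa [natToZ, Finset.sum_apply, Pi.smul_apply, smul_eq_mul] using h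
  have hcast : ∀ (w : Fin n → ℕ) (t : Fin d),
      (((∑ l, w l • a l) t : ℕ) : ℤ) = ∑ l, (w l : ℤ) * (a l t : ℤ) := by
    intro w t
    simp [Finset.sum_apply, Pi.smul_apply, smul_eq_mul, Nat.cast_sum, Nat.cast_mul]
  have hsplit : ∀ l, ((pospart v l : ℤ)) = (negpart v l : ℤ) + v l := by
    intro l
    simp only [pospart, negpart]
    omega
  have hzero : ∀ t, ∑ l, v l * (a l t : ℤ) = 0 := by
    intro t
    have h : ∑ l, v l * (a l t : ℤ)
        = (∑ l, M i l * (a l t : ℤ)) - ∑ l, M j l * (a l t : ℤ) := by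
      rw [← Finset.sum_sub_distrib]
      exact Finset.sum_congr rfl fun l _ => by simp [hv]; ring
    rw [h, hrow' i t, hrow' j t, sub_self]
  have h1 : ∑ l, pospart v l • a l = ∑ l, negpart v l • a l := by
    funext t
    have h : (((∑ l, pospart v l • a l) t : ℕ) : ℤ)
        = (((∑ l, negpart v l • a l) t : ℕ) : ℤ) := by
      rw [hcast, hcast]
      calc ∑ l, (pospart v l : ℤ) * a l t
          = ∑ l, ((negpart v l : ℤ) + v l) * a l t :=
            Finset.sum_congr rfl fun l _ => by rw [hsplit l]
        _ = ∑ l, (negpart v l : ℤ) * a l t + ∑ l, v l * a l t := by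
            rw [← Finset.sum_add_distrib]
            exact Finset.sum_congr rfl fun l _ => by ring
        _ = ∑ l, (negpart v l : ℤ) * a l t := by rw [hzero t, add_zero]
    exact_mod_cast h
  refine ⟨h1, ?_, ?_, ?_⟩
  · simp only [toricIdeal, RingHom.mem_ker, AlgHom.toRingHom_eq_coe, RingHom.coe_coe]
    rw [binom, map_sub, toricMap_mono, toricMap_mono, h1, sub_self]
  · -- the degree bound
    set E : Fin n → ℤ := fun l =>
      (Pi.single i 1 : Fin n → ℤ) l + (Pi.single j 1 : Fin n → ℤ) l with hE
    have hEi : E i = 1 := by simp [hE, Pi.single_apply, hne]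
    have hEj : E j = 1 := by simp [hE, Pi.single_apply, hne.symm]
    have hEo : ∀ l, l ≠ i → l ≠ j → E l = 0 := by
      intro l h1 h2; simp [hE, Pi.single_apply, h1, h2]
    have hcoef : ∀ l, (pospart v l : ℤ) ≤ M i l + E l := by
      intro l
      have hvv : v l = M i l - M j l := rfl
      simp only [pospart]
      by_cases hli : l = i
      · rw [hli, hEi]
        have hvv1 : v i = M i i - M j i := rfl
        have h1 := hdiag i
        have h2 := hposM j i hne.symm
        omega
      · by_cases hlj : l = j
        · rw [hlj, hEj]
          have hvv2 : v j = M i j - M j j := rfl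
          have h1 := hdiag j
          have h2 := hposM i j hne
          omega
        · rw [hEo l hli hlj]
          have h2 := hposM j l (fun h => hlj h.symm)
          have h3 := hposM i l (fun h => hli h.symm)
          omega
    have hEsum : ∀ t, ∑ l, E l * (a l t : ℤ) = (a i t : ℤ) + a j t := by
      intro t
      simp [hE, Pi.single_apply, add_mul, Finset.sum_add_distrib, ite_mul]
    intro t
    have hb : (((∑ l, pospart v l • a l) t : ℕ) : ℤ) ≤ (f t : ℤ) + a i t + a j t := by
      rw [hcast]
      calc ∑ l, (pospart v l : ℤ) * a l t
          ≤ ∑ l, (M i l + E l) * (a l t : ℤ) := by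
            apply Finset.sum_le_sum
            intro l _
            exact mul_le_mul_of_nonneg_right (hcoef l) (by positivity)
        _ = ∑ l, M i l * (a l t : ℤ) + ∑ l, E l * (a l t : ℤ) := by
            rw [← Finset.sum_add_distrib]
            exact Finset.sum_congr rfl fun l _ => by ring
        _ = (f t : ℤ) + a i t + a j t := by rw [hrow' i t, hEsum t]; ring
    simp only [Pi.add_apply]
    exact_mod_cast hb
  · intro hdisj
    set E : Fin n → ℤ := fun l =>
      (Pi.single i 1 : Fin n → ℤ) l + (Pi.single j 1 : Fin n → ℤ) l with hE
    have hEi : E i = 1 := by simp [hE, Pi.single_apply, hne]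
    have hEj : E j = 1 := by simp [hE, Pi.single_apply, hne.symm]
    have hEo : ∀ l, l ≠ i → l ≠ j → E l = 0 := by
      intro l h1 h2; simp [hE, Pi.single_apply, h1, h2]
    have hcoefeq : ∀ l, (pospart v l : ℤ) = M i l + E l := by
      intro l
      have hvv : v l = M i l - M j l := rfl
      have hd : M i l + E l = 0 ∨ M j l + E l = 0 := by
        have := hdisj l
        simp only [hE]
        omega
      simp only [pospart]
      by_cases hli : l = i
      · rw [hli, hEi] at hd ⊢
        have hvv1 : v i = M i i - M j i := rfl
        have h1 := hdiag i
        have h2 := hposM j i hne.symm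
        omega
      · by_cases hlj : l = j
        · rw [hlj] at hd ⊢
          rw [hEj] at hd ⊢
          have hvv2 : v j = M i j - M j j := rfl
          have h1 := hdiag j
          have h2 := hposM i j hne
          omega
        · rw [hEo l hli hlj] at hd ⊢
          have h2 := hposM j l (fun h => hlj h.symm)
          have h3 := hposM i l (fun h => hli h.symm)
          omega
    have hEsum : ∀ t, ∑ l, E l * (a l t : ℤ) = (a i t : ℤ) + a j t := by
      intro t
      simp [hE, Pi.single_apply, add_mul, Finset.sum_add_distrib, ite_mul]
    funext t
    have hb : (((∑ l, pospart v l • a l) t : ℕ) : ℤ) = (f t : ℤ) + a i t + a j t := by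
      rw [hcast]
      calc ∑ l, (pospart v l : ℤ) * a l t
          = ∑ l, (M i l + E l) * (a l t : ℤ) :=
            Finset.sum_congr rfl fun l _ => by rw [hcoefeq l]
        _ = ∑ l, M i l * (a l t : ℤ) + ∑ l, E l * (a l t : ℤ) := by
            rw [← Finset.sum_add_distrib]
            exact Finset.sum_congr rfl fun l _ => by ring
        _ = (f t : ℤ) + a i t + a j t := by rw [hrow' i t, hEsum t]; ring
    have hg : ((f + a i + a j) t : ℤ) = (f t : ℤ) + a i t + a j t := by
      simp [Pi.add_apply]
    exact_mod_cast hb.trans hg.symm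
end

section
/- Let S = ⟨a_1,…,a_n⟩ ⊆ ℕ^d be an affine semigroup. If ∪_{j=1}^n Ap(S, a_j) ⊆ UF(S), then every f ∈ PF(S) has a unique row-factorization matrix. Moreover, if H(S) is finite (and non-empty) and every f ∈ PF(S) has a unique row-factorization matrix, then ∪_{j=1}^n Ap(S, a_j) ⊆ UF(S). -/
open Finset BigOperators

-- membership lemma
lemma mem_iff_fact {n d : ℕ} {S : AddSubmonoid (Fin d → ℕ)} {a : Fin n → Fin d → ℕ}
    (hmin : MinGen a S) (x : Fin d → ℕ) :
    x ∈ S ↔ ∃ u : Fin n → ℕ, x = ∑ l, u l • a l := by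
  have hcl : AddSubmonoid.closure (Set.range a) = S := hmin.2.1
  constructor
  · intro hx
    rw [← hcl] at hx
    induction hx using AddSubmonoid.closure_induction with
    | mem y hy =>
      obtain ⟨i, rfl⟩ := hy
      exact ⟨Pi.single i 1, by simp [Pi.single_apply, Finset.sum_ite_eq']⟩
    | zero => exact ⟨0, by simp⟩
    | add y z _ _ hy hz =>
      obtain ⟨u, rfl⟩ := hy
      obtain ⟨v, rfl⟩ := hz
      exact ⟨u + v, by simp [add_smul, Finset.sum_add_distrib]⟩
  · rintro ⟨u, rfl⟩
    rw [← hcl]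
    exact AddSubmonoid.sum_mem _ fun l _ =>
      AddSubmonoid.nsmul_mem _ (AddSubmonoid.subset_closure (Set.mem_range_self l)) (u l)

lemma gen_ne_zero {n d : ℕ} {S : AddSubmonoid (Fin d → ℕ)} {a : Fin n → Fin d → ℕ}
    (hmin : MinGen a S) (i : Fin n) : a i ≠ 0 := by
  intro h
  exact hmin.2.2 (a i) ⟨i, rfl⟩ (h ▸ (AddSubmonoid.closure _).zero_mem)

lemma gen_mem {n d : ℕ} {S : AddSubmonoid (Fin d → ℕ)} {a : Fin n → Fin d → ℕ}
    (hmin : MinGen a S) (i : Fin n) : a i ∈ S := by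
  rw [← hmin.2.1]; exact AddSubmonoid.subset_closure (Set.mem_range_self i)

lemma entry_zero {n d : ℕ} {S : AddSubmonoid (Fin d → ℕ)} {a : Fin n → Fin d → ℕ}
    (hmin : MinGen a S) {f : Fin d → ℕ} (hf : f ∉ S) {i : Fin n} {u : Fin n → ℕ}
    (h : f + a i = ∑ l, u l • a l) : u i = 0 := by
  by_contra h0
  apply hf
  rw [mem_iff_fact hmin]
  refine ⟨Function.update u i (u i - 1), ?_⟩
  have hsum : ∑ l, Function.update u i (u i - 1) l • a l
      = (u i - 1) • a i + ∑ l ∈ Finset.univ.erase i, u l • a l := by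
    rw [← Finset.add_sum_erase _ (fun l => Function.update u i (u i - 1) l • a l)
      (Finset.mem_univ i)]
    congr 1
    · simp
    · exact Finset.sum_congr rfl fun l hl => by
        rw [Function.update_of_ne (Finset.ne_of_mem_erase hl)]
  have horig : ∑ l, u l • a l = u i • a i + ∑ l ∈ Finset.univ.erase i, u l • a l :=
    (Finset.add_sum_erase _ _ (Finset.mem_univ i)).symm
  have hui : u i - 1 + 1 = u i := Nat.succ_pred_eq_of_pos (Nat.pos_of_ne_zero h0)
  apply add_right_cancel (b := a i)
  rw [h, hsum, horig, add_right_comm]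
  congr 1
  rw [← hui, add_nsmul, one_nsmul, hui]

lemma natToQ_add {d : ℕ} (x y : Fin d → ℕ) : natToQ (x + y) = natToQ x + natToQ y := by
  funext k; simp [natToQ]

lemma mem_cone_of_mem {d : ℕ} {S : AddSubmonoid (Fin d → ℕ)} {s : Fin d → ℕ}
    (hs : s ∈ S) : natToQ s ∈ cone S :=
  ⟨1, fun _ => 1, fun _ => s, fun _ => zero_le_one, fun _ => hs, by simp⟩

lemma cone_add {d : ℕ} {S : AddSubmonoid (Fin d → ℕ)} {p q : Fin d → ℚ}
    (hp : p ∈ cone S) (hq : q ∈ cone S) : p + q ∈ cone S := by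
  obtain ⟨m₁, lam₁, s₁, h₁, h₂, rfl⟩ := hp
  obtain ⟨m₂, lam₂, s₂, h₃, h₄, rfl⟩ := hq
  refine ⟨m₁ + m₂, Fin.addCases lam₁ lam₂, Fin.addCases s₁ s₂, ?_, ?_, ?_⟩
  · intro i
    refine Fin.addCases (fun i => ?_) (fun i => ?_) i <;> simp [h₁, h₃]
  · intro i
    refine Fin.addCases (fun i => ?_) (fun i => ?_) i <;> simp [h₂, h₄]
  · rw [Fin.sum_univ_add]
    simp

lemma exists_PF_above {d : ℕ} {S : AddSubmonoid (Fin d → ℕ)}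
    (hfin : (HSet S).Finite) {z : Fin d → ℕ} (hz : z ∈ HSet S) :
    ∃ f ∈ PF S, ∃ s ∈ S, f = z + s := by
  set T : Set (Fin d → ℕ) := {w ∈ HSet S | ∃ s ∈ S, w = z + s} with hT
  have hTfin : T.Finite := hfin.subset (fun w hw => hw.1)
  have hTne : T.Nonempty := ⟨z, hz, 0, S.zero_mem, by simp⟩
  obtain ⟨f, hfT, hmax⟩ := hTfin.exists_maximalFor (fun w => ∑ k, w k) T hTne
  refine ⟨f, ⟨hfT.1, ?_⟩, hfT.2⟩
  intro s hs hs0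
  by_contra hfs
  have hmem : f + s ∈ T := by
    obtain ⟨s₀, hs₀, rfl⟩ := hfT.2
    exact ⟨⟨by rw [natToQ_add]; exact cone_add hfT.1.1 (mem_cone_of_mem hs), hfs⟩,
      s₀ + s, S.add_mem hs₀ hs, by ring⟩
  have hsum : (∑ k, f k) + ∑ k, s k = ∑ k, (f + s) k := by
    simp [Finset.sum_add_distrib]
  have hle : (∑ k, f k) ≤ ∑ k, (f + s) k := by omega
  have : ∑ k, (f + s) k ≤ ∑ k, f k := hmax (j := f + s) hmem hle
  have hs0' : ∑ k, s k = 0 := by omega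
  apply hs0
  funext k
  exact Finset.sum_eq_zero_iff.1 hs0' k (Finset.mem_univ k)

lemma row_to_fact {n d : ℕ} {a : Fin n → Fin d → ℕ} {f : Fin d → ℕ}
    {M : Matrix (Fin n) (Fin n) ℤ} (hM : IsRFMatrix a f M) (i : Fin n) :
    f + a i = ∑ l, (M i l).toNat • a l := by
  have key : ∀ l, ((M i l).toNat : ℤ) = M i l + if l = i then 1 else 0 := by
    intro l
    by_cases hl : l = i
    · subst hl; simp [hM.1 l]
    · simp [hl, Int.toNat_of_nonneg (hM.2.1 i l (fun e => hl e.symm))]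
  funext k
  have hrow := congrFun (hM.2.2 i) k
  simp only [Finset.sum_apply, Pi.smul_apply, natToZ, smul_eq_mul] at hrow
  have hz : (((f + a i) k : ℕ) : ℤ) = (((∑ l, (M i l).toNat • a l) k : ℕ) : ℤ) := by
    simp only [Pi.add_apply, Finset.sum_apply, Pi.smul_apply, smul_eq_mul]
    push_cast
    rw [Finset.sum_congr rfl (fun l _ => by rw [key l, add_mul] :
      ∀ l ∈ Finset.univ, ((M i l).toNat : ℤ) * (a l k : ℤ)
        = M i l * (a l k : ℤ) + (if l = i then 1 else 0) * (a l k : ℤ))]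
    rw [Finset.sum_add_distrib, hrow]
    simp [Finset.sum_ite_eq']
  exact_mod_cast hz

lemma fact_to_row {n d : ℕ} {a : Fin n → Fin d → ℕ} {f : Fin d → ℕ}
    {i : Fin n} {u : Fin n → ℕ} (hui : u i = 0) (h : f + a i = ∑ l, u l • a l) :
    ∑ l, (if l = i then (-1 : ℤ) else (u l : ℤ)) • natToZ (a l) = natToZ f := by
  have key : ∀ l, (if l = i then (-1 : ℤ) else (u l : ℤ))
      = (u l : ℤ) - (if l = i then 1 else 0) := by
    intro l
    by_cases hl : l = i
    · subst hl; simp [hui]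
    · simp [hl]
  funext k
  have hk := congrFun h k
  simp only [Pi.add_apply, Finset.sum_apply, Pi.smul_apply, smul_eq_mul] at hk
  simp only [Finset.sum_apply, Pi.smul_apply, natToZ, smul_eq_mul]
  rw [Finset.sum_congr rfl (fun l _ => by rw [key l, sub_mul] :
    ∀ l ∈ Finset.univ, (if l = i then (-1 : ℤ) else (u l : ℤ)) * (a l k : ℤ)
      = (u l : ℤ) * (a l k : ℤ) - (if l = i then 1 else 0) * (a l k : ℤ))]
  rw [Finset.sum_sub_distrib]
  have hc : ∑ l, ((u l : ℤ)) * ((a l k : ℕ) : ℤ) = ((f k : ℕ) : ℤ) + ((a i k : ℕ) : ℤ) := by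
    rw [show ((f k : ℕ) : ℤ) + ((a i k : ℕ) : ℤ) = (((f k + a i k : ℕ)) : ℤ) from by push_cast; ring,
      hk]
    push_cast
    rfl
  rw [hc]
  simp [Finset.sum_ite_eq']


/-- If `∪_j Ap(S, a_j) ⊆ UF(S)` then every pseudo-Frobenius element
has a unique RF-matrix; conversely, when `H(S)` is finite and non-empty, uniqueness of
RF-matrices implies `∪_j Ap(S, a_j) ⊆ UF(S)`. -/
theorem unique_RFMatrix_iff_Ap_subset_UF {n d : ℕ}
    (S : AddSubmonoid (Fin d → ℕ)) (a : Fin n → Fin d → ℕ) (hmin : MinGen a S) :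
    ((⋃ j, Ap S (a j)) ⊆ UF a →
      ∀ f ∈ PF S, ∃! M : Matrix (Fin n) (Fin n) ℤ, IsRFMatrix a f M) ∧
    ((HSet S).Finite → (HSet S).Nonempty →
      (∀ f ∈ PF S, ∃! M : Matrix (Fin n) (Fin n) ℤ, IsRFMatrix a f M) →
      (⋃ j, Ap S (a j)) ⊆ UF a) := by
  constructor
  · intro hAp f hf
    have hfS : f ∉ S := hf.1.2
    have hfac : ∀ i : Fin n, ∃ u : Fin n → ℕ, f + a i = ∑ l, u l • a l := fun i =>
      (mem_iff_fact hmin _).1 (hf.2 (a i) (gen_mem hmin i) (gen_ne_zero hmin i))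
    choose u hu using hfac
    have hui : ∀ i, u i i = 0 := fun i => entry_zero hmin hfS (hu i)
    refine ⟨Matrix.of (fun i l => if l = i then (-1 : ℤ) else (u i l : ℤ)), ⟨?_, ?_, ?_⟩, ?_⟩
    · intro i; simp [Matrix.of_apply]
    · intro i l hil
      simp only [Matrix.of_apply, if_neg (Ne.symm hil)]
      exact Int.natCast_nonneg _
    · intro i; exact fact_to_row (hui i) (hu i)
    · intro M hM
      have hrow : ∀ i, f + a i = ∑ l, (M i l).toNat • a l := row_to_fact hM
      funext i l
      have hUF : f + a i ∈ UF a := by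
        apply hAp
        exact Set.mem_iUnion.2 ⟨i, ⟨hf.2 (a i) (gen_mem hmin i) (gen_ne_zero hmin i),
          f, hf.1, add_comm f (a i)⟩⟩
      have e : (fun l => (M i l).toNat) = u i := hUF.unique (hrow i) (hu i)
      by_cases hl : l = i
      · subst hl; simp [Matrix.of_apply, hM.1 l]
      · have : (M i l).toNat = u i l := congrFun e l
        simp only [Matrix.of_apply, if_neg hl]
        rw [← this, Int.toNat_of_nonneg (hM.2.1 i l (fun hh => hl hh.symm))]
  · intro hfin _ hRF y hy
    obtain ⟨j, hyS, z, hzH, hyz⟩ := Set.mem_iUnion.1 hy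
    obtain ⟨u0, hu0⟩ := (mem_iff_fact hmin y).1 hyS
    refine ⟨u0, hu0, ?_⟩
    intro v hv
    by_contra hne'
    obtain ⟨f, hfPF, s, hsS, hfz⟩ := exists_PF_above hfin hzH
    obtain ⟨w, hw⟩ := (mem_iff_fact hmin s).1 hsS
    have hfS : f ∉ S := hfPF.1.2
    have hfy : f + a j = y + s := by rw [hfz, hyz]; ring
    have h1 : f + a j = ∑ l, (u0 + w) l • a l := by
      rw [hfy, hu0, hw]
      simp [add_smul, Finset.sum_add_distrib]
    have h2 : f + a j = ∑ l, (v + w) l • a l := by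
      rw [hfy, hv, hw]
      simp [add_smul, Finset.sum_add_distrib]
    have hz1 : (u0 + w) j = 0 := entry_zero hmin hfS h1
    have hz2 : (v + w) j = 0 := entry_zero hmin hfS h2
    obtain ⟨M₀, hM₀, -⟩ := hRF f hfPF
    set r1 : Fin n → ℤ := fun l => if l = j then (-1 : ℤ) else ((u0 + w) l : ℤ) with hr1
    set r2 : Fin n → ℤ := fun l => if l = j then (-1 : ℤ) else ((v + w) l : ℤ) with hr2
    have hRF1 : IsRFMatrix a f (M₀.updateRow j r1) := by
      refine ⟨fun i => ?_, fun i l hil => ?_, fun i => ?_⟩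
      · by_cases hij : i = j
        · subst hij; simp [Matrix.updateRow_self, hr1]
        · simp [Matrix.updateRow_ne hij, hM₀.1 i]
      · by_cases hij : i = j
        · subst hij
          simp only [Matrix.updateRow_self, hr1, if_neg (Ne.symm hil)]
          exact Int.natCast_nonneg _
        · simp only [Matrix.updateRow_ne hij]
          exact hM₀.2.1 i l hil
      · by_cases hij : i = j
        · subst hij
          simp only [Matrix.updateRow_self]
          exact fact_to_row hz1 h1
        · simp only [Matrix.updateRow_ne hij]
          exact hM₀.2.2 i
    have hRF2 : IsRFMatrix a f (M₀.updateRow j r2) := by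
      refine ⟨fun i => ?_, fun i l hil => ?_, fun i => ?_⟩
      · by_cases hij : i = j
        · subst hij; simp [Matrix.updateRow_self, hr2]
        · simp [Matrix.updateRow_ne hij, hM₀.1 i]
      · by_cases hij : i = j
        · subst hij
          simp only [Matrix.updateRow_self, hr2, if_neg (Ne.symm hil)]
          exact Int.natCast_nonneg _
        · simp only [Matrix.updateRow_ne hij]
          exact hM₀.2.1 i l hil
      · by_cases hij : i = j
        · subst hij
          simp only [Matrix.updateRow_self]
          exact fact_to_row hz2 h2
        · simp only [Matrix.updateRow_ne hij]
          exact hM₀.2.2 i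
    have heq : M₀.updateRow j r1 = M₀.updateRow j r2 :=
      (hRF f hfPF).unique hRF1 hRF2
    have hrow : r1 = r2 := by
      have := congrFun heq j
      rwa [Matrix.updateRow_self, Matrix.updateRow_self] at this
    have huv : u0 + w = v + w := by
      funext l
      by_cases hl : l = j
      · subst hl; rw [hz1, hz2]
      · have := congrFun hrow l
        simp only [hr1, hr2, if_neg hl] at this
        exact_mod_cast this
    exact hne' (add_right_cancel huv).symm
end

section
/- Let n ≥ 3, let k be a field, and let S = ⟨a_1,…,a_n⟩ ⊆ ℕ^d be an affine semigroup that is a gluing S = S₁ +_c S₂ of affine semigroups S₁ and S₂ with PF(S₁) ≠ ∅ and PF(S₂) ≠ ∅. Then the toric ideal I_S ⊆ k[x_1,…,x_n] is not generic. -/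
open Finset BigOperators

namespace GNG

variable {n d : ℕ}


variable {n d : ℕ}

/-- weighted degree of an exponent vector -/
def dg (a : Fin n → Fin d → ℕ) (u : Fin n → ℕ) : Fin d → ℕ := ∑ i, u i • a i

/-- total weight of a vector in ℕ^d -/
def wtd {d : ℕ} (b : Fin d → ℕ) : ℕ := ∑ j, b j

open Classical in
/-- restriction of an exponent vector to an index predicate -/
noncomputable def rst (I : Fin n → Prop) (x : Fin n → ℕ) : Fin n → ℕ :=
  fun i => if I i then x i else 0

lemma dg_add (a : Fin n → Fin d → ℕ) (u v : Fin n → ℕ) :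
    dg a (u + v) = dg a u + dg a v := by
  simp [dg, add_smul, Finset.sum_add_distrib]

lemma dg_zero (a : Fin n → Fin d → ℕ) : dg a 0 = 0 := by simp [dg]

lemma dg_apply (a : Fin n → Fin d → ℕ) (u : Fin n → ℕ) (j : Fin d) :
    dg a u j = ∑ i, u i * a i j := by
  simp [dg, Finset.sum_apply]

lemma dg_nsmul (a : Fin n → Fin d → ℕ) (m : ℕ) (u : Fin n → ℕ) :
    dg a (m • u) = m • dg a u := by
  funext j
  simp [dg_apply, Finset.mul_sum, mul_assoc]

lemma wtd_add (b b' : Fin d → ℕ) : wtd (b + b') = wtd b + wtd b' := by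
  simp [wtd, Finset.sum_add_distrib]

lemma wtd_eq_zero_iff (b : Fin d → ℕ) : wtd b = 0 ↔ b = 0 := by
  constructor
  · intro h
    funext j
    have := Finset.sum_eq_zero_iff.mp h j (Finset.mem_univ j)
    simpa using this
  · rintro rfl; simp [wtd]

lemma wtd_dg (a : Fin n → Fin d → ℕ) (u : Fin n → ℕ) :
    wtd (dg a u) = ∑ i, u i * wtd (a i) := by
  simp only [wtd, dg_apply]
  rw [Finset.sum_comm]
  exact Finset.sum_congr rfl fun i _ => by rw [Finset.mul_sum]

lemma wtd_pos_of_ne_zero {b : Fin d → ℕ} (hb : b ≠ 0) : 0 < wtd b := by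
  rcases Nat.eq_zero_or_pos (wtd b) with h | h
  · exact absurd ((wtd_eq_zero_iff b).mp h) hb
  · exact h

lemma dg_eq_zero {a : Fin n → Fin d → ℕ} (ha : ∀ i, a i ≠ 0) {u : Fin n → ℕ}
    (h : dg a u = 0) : u = 0 := by
  funext i
  have hw : wtd (dg a u) = 0 := by rw [h]; simp [wtd]
  rw [wtd_dg] at hw
  have := Finset.sum_eq_zero_iff.mp hw i (Finset.mem_univ i)
  have hai : 0 < wtd (a i) := wtd_pos_of_ne_zero (ha i)
  simp only [Pi.zero_apply]
  rcases Nat.mul_eq_zero.mp this with h' | h'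
  · exact h'
  · omega

lemma wtd_dg_pos {a : Fin n → Fin d → ℕ} (ha : ∀ i, a i ≠ 0) {u : Fin n → ℕ}
    (hu : u ≠ 0) : 0 < wtd (dg a u) := by
  rcases Nat.eq_zero_or_pos (wtd (dg a u)) with h | h
  · exact absurd (dg_eq_zero ha ((wtd_eq_zero_iff _).mp h)) hu
  · exact h

lemma rst_apply_of (I : Fin n → Prop) (x : Fin n → ℕ) {i : Fin n} (h : I i) :
    rst I x i = x i := by simp [rst, h]

lemma rst_apply_of_not (I : Fin n → Prop) (x : Fin n → ℕ) {i : Fin n} (h : ¬ I i) :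
    rst I x i = 0 := by simp [rst, h]

lemma rst_add (I : Fin n → Prop) (x y : Fin n → ℕ) :
    rst I (x + y) = rst I x + rst I y := by
  funext i; by_cases h : I i <;> simp [rst, h]

lemma rst_nsmul (I : Fin n → Prop) (m : ℕ) (x : Fin n → ℕ) :
    rst I (m • x) = m • rst I x := by
  funext i; by_cases h : I i <;> simp [rst, h]

lemma rst_idem (I : Fin n → Prop) (x : Fin n → ℕ) : rst I (rst I x) = rst I x := by
  funext i; by_cases h : I i <;> simp [rst, h]

lemma rst_compl (I : Fin n → Prop) (x : Fin n → ℕ) :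
    rst I x + rst (fun i => ¬ I i) x = x := by
  funext i; by_cases h : I i <;> simp [rst, h]

lemma rst_eq_self_iff (I : Fin n → Prop) (x : Fin n → ℕ) :
    rst I x = x ↔ ∀ i, ¬ I i → x i = 0 := by
  constructor
  · intro h i hi
    rw [← h]; exact rst_apply_of_not I x hi
  · intro h; funext i
    by_cases hi : I i
    · exact rst_apply_of I x hi
    · rw [rst_apply_of_not I x hi, h i hi]

lemma rst_compl_eq_zero_iff (I : Fin n → Prop) (x : Fin n → ℕ) :
    rst (fun i => ¬ I i) x = 0 ↔ rst I x = x := by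
  constructor
  · intro h
    have := rst_compl I x
    rw [h, add_zero] at this; exact this
  · intro h
    funext i
    by_cases hi : I i
    · simp [rst, hi]
    · have := congrFun h i
      rw [rst_apply_of_not I x hi] at this
      simp [rst, hi, ← this]


variable {n d : ℕ}

/-- membership in closure via multiset sums (general) -/
lemma mem_closure_iff_multiset {M : Type*} [AddCommMonoid M] (A : Set M) (x : M) :
    x ∈ AddSubmonoid.closure A ↔ ∃ l : Multiset M, (∀ y ∈ l, y ∈ A) ∧ l.sum = x := by
  constructor
  · intro hx
    induction hx using AddSubmonoid.closure_induction with
    | mem y hy => exact ⟨{y}, by simpa using hy, by simp⟩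
    | zero => exact ⟨0, by simp, by simp⟩
    | add y z _ _ hy hz =>
      obtain ⟨ly, hly, hsy⟩ := hy
      obtain ⟨lz, hlz, hsz⟩ := hz
      exact ⟨ly + lz, fun w hw => by
        rcases Multiset.mem_add.mp hw with h | h
        exacts [hly w h, hlz w h], by simp [hsy, hsz]⟩
  · rintro ⟨l, hl, rfl⟩
    exact AddSubmonoid.multiset_sum_mem _ l fun y hy => AddSubmonoid.subset_closure (hl y hy)

/-- membership in closure of a subset of the range of `a`, via coefficient vectors -/
lemma mem_closure_iff_coeff (a : Fin n → Fin d → ℕ) (A : Set (Fin d → ℕ))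
    (hA : A ⊆ Set.range a) (x : Fin d → ℕ) :
    x ∈ AddSubmonoid.closure A ↔
      ∃ u : Fin n → ℕ, (∀ i, u i ≠ 0 → a i ∈ A) ∧ dg a u = x := by
  constructor
  · intro hx
    induction hx using AddSubmonoid.closure_induction with
    | mem y hy =>
      obtain ⟨i, rfl⟩ := hA hy
      refine ⟨Pi.single i 1, ?_, ?_⟩
      · intro j hj
        by_cases h : j = i
        · subst h; exact hy
        · simp [Pi.single_apply, h] at hj
      · simp only [dg]
        rw [Finset.sum_eq_single i]
        · simp
        · intro j _ hj; simp [Pi.single_apply, hj]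
        · intro h; exact absurd (Finset.mem_univ i) h
    | zero => exact ⟨0, by simp, by simp [dg]⟩
    | add y z _ _ hy hz =>
      obtain ⟨u, hu, rfl⟩ := hy
      obtain ⟨v, hv, rfl⟩ := hz
      refine ⟨u + v, fun i hi => ?_, by simp [dg, add_smul, Finset.sum_add_distrib]⟩
      have : u i ≠ 0 ∨ v i ≠ 0 := by
        by_contra hc; push_neg at hc
        simp only [Pi.add_apply, hc.1, hc.2] at hi; exact hi rfl
      rcases this with h | h
      exacts [hu i h, hv i h]
  · rintro ⟨u, hu, rfl⟩
    refine AddSubmonoid.sum_mem _ fun i _ => ?_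
    by_cases h : u i = 0
    · simp only [h, zero_smul]; exact zero_mem _
    · exact (AddSubmonoid.closure A).nsmul_mem (AddSubmonoid.subset_closure (hu i h)) _


namespace MinGen

variable {d : ℕ}

lemma add_eq_zero' {x y : Fin d → ℕ} (h : x + y = 0) : x = 0 ∧ y = 0 := by
  constructor <;> (funext j; have := congrFun h j; simp only [Pi.add_apply, Pi.zero_apply] at this ⊢; omega)

lemma zero_not_mem {A : Set (Fin d → ℕ)} {S : AddSubmonoid (Fin d → ℕ)}
    (hA : IsMinGenSet A S) : 0 ∉ A := by
  intro h0
  exact hA.2 0 h0 (zero_mem _)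

/-- the set of irreducible elements -/
def Irr (S : AddSubmonoid (Fin d → ℕ)) : Set (Fin d → ℕ) :=
  {x | x ∈ S ∧ x ≠ 0 ∧ ∀ y ∈ S, ∀ z ∈ S, y ≠ 0 → z ≠ 0 → y + z ≠ x}

lemma eq_irr {A : Set (Fin d → ℕ)} {S : AddSubmonoid (Fin d → ℕ)}
    (hA : IsMinGenSet A S) : A = Irr S := by
  have hAS : ∀ x ∈ A, x ∈ S := fun x hx => hA.1 ▸ AddSubmonoid.subset_closure hx
  apply Set.Subset.antisymm
  · intro x hx
    refine ⟨hAS x hx, fun h0 => zero_not_mem hA (h0 ▸ hx), ?_⟩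
    rintro y hy z hz hy0 hz0 hyz
    -- x = y + z with y z ∈ S nonzero; derive x ∈ closure (A \ {x})
    have hyc : y ∈ AddSubmonoid.closure A := hA.1.symm ▸ hy
    have hzc : z ∈ AddSubmonoid.closure A := hA.1.symm ▸ hz
    obtain ⟨ly, hly, hsy⟩ := (GNG.mem_closure_iff_multiset A y).mp hyc
    obtain ⟨lz, hlz, hsz⟩ := (GNG.mem_closure_iff_multiset A z).mp hzc
    have hxy : ∀ w ∈ ly, w ≠ x := by
      rintro w hw rfl
      obtain ⟨t, rfl⟩ := Multiset.exists_cons_of_mem hw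
      rw [Multiset.sum_cons] at hsy
      -- y = w + t.sum, x = y + z = w + (t.sum + z) so t.sum + z = 0
      have : w + (t.sum + z) = w + 0 := by
        rw [add_zero, ← add_assoc, hsy, hyz]
      have h0 : t.sum + z = 0 := add_left_cancel this
      exact hz0 (add_eq_zero' h0).2
    have hxz : ∀ w ∈ lz, w ≠ x := by
      rintro w hw rfl
      obtain ⟨t, rfl⟩ := Multiset.exists_cons_of_mem hw
      rw [Multiset.sum_cons] at hsz
      have : w + (t.sum + y) = w + 0 := by
        rw [add_zero, ← add_assoc, hsz, add_comm z y]
        exact hyz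
      have h0 : t.sum + y = 0 := add_left_cancel this
      exact hy0 (add_eq_zero' h0).2
    have hyc' : y ∈ AddSubmonoid.closure (A \ {x}) := by
      rw [GNG.mem_closure_iff_multiset]
      exact ⟨ly, fun w hw => ⟨hly w hw, hxy w hw⟩, hsy⟩
    have hzc' : z ∈ AddSubmonoid.closure (A \ {x}) := by
      rw [GNG.mem_closure_iff_multiset]
      exact ⟨lz, fun w hw => ⟨hlz w hw, hxz w hw⟩, hsz⟩
    have hmem := add_mem hyc' hzc'
    rw [hyz] at hmem
    exact hA.2 x hx hmem
  · rintro x ⟨hxS, hx0, hirr⟩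
    have hxc : x ∈ AddSubmonoid.closure A := hA.1.symm ▸ hxS
    obtain ⟨l, hl, hsl⟩ := (GNG.mem_closure_iff_multiset A x).mp hxc
    rcases Multiset.empty_or_exists_mem l with rfl | ⟨w, hw⟩
    · exact absurd hsl.symm (by simpa using hx0)
    obtain ⟨t, rfl⟩ := Multiset.exists_cons_of_mem hw
    rw [Multiset.sum_cons] at hsl
    rcases Multiset.empty_or_exists_mem t with rfl | ⟨w', hw'⟩
    · simp only [Multiset.sum_zero, add_zero] at hsl
      exact hsl ▸ hl w hw
    · exfalso
      have hwA : w ∈ A := hl w hw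
      have hw0 : w ≠ 0 := fun h => zero_not_mem hA (h ▸ hwA)
      have htS : t.sum ∈ S := hA.1 ▸ AddSubmonoid.multiset_sum_mem _ t
        (fun y hy => AddSubmonoid.subset_closure (hl y (Multiset.mem_cons_of_mem hy)))
      have ht0 : t.sum ≠ 0 := by
        obtain ⟨t', rfl⟩ := Multiset.exists_cons_of_mem hw'
        rw [Multiset.sum_cons]
        intro h
        have hw'A : w' ∈ A := hl w' (Multiset.mem_cons_of_mem (Multiset.mem_cons_self _ _))
        exact zero_not_mem hA ((add_eq_zero' h).1 ▸ hw'A)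
      exact hirr w (hAS w hwA) t.sum htS hw0 ht0 hsl
  
lemma unique {A B : Set (Fin d → ℕ)} {S : AddSubmonoid (Fin d → ℕ)}
    (hA : IsMinGenSet A S) (hB : IsMinGenSet B S) : A = B := by
  rw [eq_irr hA, eq_irr hB]

end MinGen

variable {k : Type*} [CommRing k]


/-- function → finsupp -/
noncomputable def fsp {n : ℕ} (u : Fin n → ℕ) : Fin n →₀ ℕ := Finsupp.equivFunOnFinite.symm u

variable {k : Type*} [CommRing k] {n d : ℕ}

lemma fsp_apply {n : ℕ} (u : Fin n → ℕ) (i : Fin n) : fsp u i = u i := rfl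

lemma fsp_add {n : ℕ} (u v : Fin n → ℕ) : fsp (u + v) = fsp u + fsp v := by
  ext i; simp [fsp_apply]

lemma fsp_zero {n : ℕ} : fsp (0 : Fin n → ℕ) = 0 := by
  ext i; simp [fsp_apply]

lemma fsp_smul {n : ℕ} (m : ℕ) (u : Fin n → ℕ) : fsp (m • u) = m • fsp u := by
  ext i; simp [fsp_apply]

lemma fsp_injective {n : ℕ} : Function.Injective (fsp (n := n)) :=
  Finsupp.equivFunOnFinite.symm.injective

lemma mono_def (u : Fin n → ℕ) : mono k u = MvPolynomial.monomial (fsp u) 1 := rfl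

lemma mono_mul (u v : Fin n → ℕ) : mono k u * mono k v = mono k (u + v) := by
  rw [mono_def, mono_def, mono_def, MvPolynomial.monomial_mul, fsp_add, one_mul]

lemma mono_zero : mono k (0 : Fin n → ℕ) = 1 := by
  rw [mono_def, fsp_zero]
  simp

lemma mono_pow (u : Fin n → ℕ) (e : ℕ) : (mono k u) ^ e = mono k (e • u) := by
  rw [mono_def, mono_def, MvPolynomial.monomial_pow, fsp_smul, one_pow]

lemma mono_prod {ι : Type*} [DecidableEq ι] (s : Finset ι) (f : ι → Fin n → ℕ) :
    (∏ i ∈ s, mono k (f i)) = mono k (∑ i ∈ s, f i) := by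
  induction s using Finset.induction_on with
  | empty => simp [mono_zero]
  | insert _ _ hx ih =>
    rw [Finset.prod_insert hx, Finset.sum_insert hx, ih, mono_mul]

lemma toricMap_mono (a : Fin n → Fin d → ℕ) (u : Fin n → ℕ) :
    toricMap k a (mono k u) = mono k (dg a u) := by
  rw [mono_def, toricMap, MvPolynomial.aeval_monomial, map_one, one_mul]
  rw [Finsupp.prod_fintype _ _ (fun i => pow_zero _)]
  have : ∀ i : Fin n, mono k (a i) ^ (fsp u i) = mono k (u i • a i) := fun i => by
    rw [mono_pow, fsp_apply]
  simp_rw [this]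
  rw [mono_prod]
  rfl

lemma mem_toricIdeal_iff {kk : Type*} [CommRing kk] (a : Fin n → Fin d → ℕ)
    (p : MvPolynomial (Fin n) kk) :
    p ∈ toricIdeal kk a ↔ toricMap kk a p = 0 := by
  rw [toricIdeal, RingHom.mem_ker]
  rfl

lemma binom_mem_toricIdeal_iff {kk : Type*} [Field kk] (a : Fin n → Fin d → ℕ)
    (u v : Fin n → ℕ) :
    binom kk u v ∈ toricIdeal kk a ↔ dg a u = dg a v := by
  rw [mem_toricIdeal_iff, binom, map_sub, toricMap_mono, toricMap_mono, sub_eq_zero,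
    mono_def, mono_def]
  rw [MvPolynomial.monomial_eq_monomial_iff]
  constructor
  · rintro (⟨h, -⟩ | ⟨h, -⟩)
    · exact fsp_injective h
    · exact absurd h one_ne_zero
  · intro h; exact Or.inl ⟨congrArg _ h, rfl⟩


variable {k : Type*} [CommRing k] {n d : ℕ}

lemma mono_mul_binom (w u v : Fin n → ℕ) :
    mono k w * binom k u v = binom k (u + w) (v + w) := by
  rw [binom, binom, mul_sub, mono_mul, mono_mul, add_comm w u, add_comm w v]

open Classical in
/-- sum of the coefficients of the monomials whose exponent lies in `Cs` -/
noncomputable def phi (Cs : Set (Fin n → ℕ)) (p : MvPolynomial (Fin n) k) : k :=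
  ∑ s ∈ p.support, if (s : Fin n → ℕ) ∈ Cs then p.coeff s else 0

open Classical in
lemma phi_eq_sum_over (Cs : Set (Fin n → ℕ)) (p : MvPolynomial (Fin n) k)
    {t : Finset (Fin n →₀ ℕ)} (ht : p.support ⊆ t) :
    phi Cs p = ∑ s ∈ t, if (s : Fin n → ℕ) ∈ Cs then p.coeff s else 0 := by
  rw [phi]
  refine Finset.sum_subset ht fun s _ hs => ?_
  rw [MvPolynomial.notMem_support_iff.mp hs]
  simp

open Classical in
lemma phi_add (Cs : Set (Fin n → ℕ)) (p q : MvPolynomial (Fin n) k) :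
    phi Cs (p + q) = phi Cs p + phi Cs q := by
  classical
  have h1 : (p + q).support ⊆ p.support ∪ q.support := MvPolynomial.support_add
  rw [phi_eq_sum_over Cs (p + q) h1,
    phi_eq_sum_over Cs p (Finset.subset_union_left),
    phi_eq_sum_over Cs q (Finset.subset_union_right), ← Finset.sum_add_distrib]
  refine Finset.sum_congr rfl fun s _ => ?_
  by_cases h : (s : Fin n → ℕ) ∈ Cs <;> simp [h, MvPolynomial.coeff_add]

lemma phi_smul (Cs : Set (Fin n → ℕ)) (c : k) (p : MvPolynomial (Fin n) k) :
    phi Cs (c • p) = c * phi Cs p := by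
  classical
  rw [phi_eq_sum_over Cs (c • p) (MvPolynomial.support_smul), phi, Finset.mul_sum]
  refine Finset.sum_congr rfl fun s _ => ?_
  by_cases h : (s : Fin n → ℕ) ∈ Cs <;> simp [h, MvPolynomial.coeff_smul]

lemma phi_zero (Cs : Set (Fin n → ℕ)) : phi Cs (0 : MvPolynomial (Fin n) k) = 0 := by
  simp [phi]

open Classical in
lemma phi_binom (Cs : Set (Fin n → ℕ)) (u v : Fin n → ℕ) :
    phi Cs (binom k u v) =
      (if u ∈ Cs then (1 : k) else 0) - (if v ∈ Cs then (1 : k) else 0) := by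
  classical
  by_cases huv : u = v
  · subst huv; rw [binom, sub_self, phi_zero, sub_self]
  · have hne : fsp u ≠ fsp v := fun h => huv (fsp_injective h)
    have hsupp : (binom k u v).support ⊆ {fsp u, fsp v} := by
      refine (MvPolynomial.support_sub _ _ _).trans ?_
      rw [mono_def, mono_def]
      refine Finset.union_subset ?_ ?_ <;>
      · rw [MvPolynomial.support_monomial]
        split <;> simp [Finset.insert_subset_iff]
    rw [phi_eq_sum_over Cs _ hsupp, Finset.sum_insert (by simpa using hne),
      Finset.sum_singleton]
    have hcu : (binom k u v).coeff (fsp u) = 1 := by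
      rw [binom, MvPolynomial.coeff_sub, mono_def, mono_def,
        MvPolynomial.coeff_monomial, MvPolynomial.coeff_monomial, if_pos rfl, if_neg hne.symm,
        sub_zero]
    have hcv : (binom k u v).coeff (fsp v) = -1 := by
      rw [binom, MvPolynomial.coeff_sub, mono_def, mono_def,
        MvPolynomial.coeff_monomial, MvPolynomial.coeff_monomial, if_neg hne, if_pos rfl,
        zero_sub]
    have hu' : ((fsp u : Fin n →₀ ℕ) : Fin n → ℕ) = u := rfl
    have hv' : ((fsp v : Fin n →₀ ℕ) : Fin n → ℕ) = v := rfl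
    rw [hcu, hcv, hu', hv']
    by_cases h1 : u ∈ Cs <;> by_cases h2 : v ∈ Cs <;> simp [h1, h2, sub_eq_add_neg]


def GoodPair (a : Fin n → Fin d → ℕ) (g : MvPolynomial (Fin n) k) (U V : Fin n → ℕ) : Prop :=
  g = binom k U V ∧ (∀ l, U l ≠ 0 ∨ V l ≠ 0) ∧ dg a U = dg a V

def Step (G : Finset (MvPolynomial (Fin n) k)) (a : Fin n → Fin d → ℕ)
    (x y : Fin n → ℕ) : Prop :=
  ∃ g ∈ G, ∃ U V w : Fin n → ℕ, GoodPair a g U V ∧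
    ((x = U + w ∧ y = V + w) ∨ (x = V + w ∧ y = U + w))

def Reach (G : Finset (MvPolynomial (Fin n) k)) (a : Fin n → Fin d → ℕ)
    (x y : Fin n → ℕ) : Prop :=
  Relation.ReflTransGen (Step G a) x y

lemma step_symm {G : Finset (MvPolynomial (Fin n) k)} {a : Fin n → Fin d → ℕ}
    {x y : Fin n → ℕ} (h : Step G a x y) : Step G a y x := by
  obtain ⟨g, hg, U, V, w, hgood, hor⟩ := h
  exact ⟨g, hg, U, V, w, hgood, hor.symm.imp And.symm And.symm⟩

lemma step_dg {G : Finset (MvPolynomial (Fin n) k)} {a : Fin n → Fin d → ℕ}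
    {x y : Fin n → ℕ} (h : Step G a x y) : dg a x = dg a y := by
  obtain ⟨g, hg, U, V, w, ⟨-, -, hdg⟩, hor⟩ := h
  rcases hor with ⟨rfl, rfl⟩ | ⟨rfl, rfl⟩ <;> rw [dg_add, dg_add, hdg]

lemma reach_dg {G : Finset (MvPolynomial (Fin n) k)} {a : Fin n → Fin d → ℕ}
    {x y : Fin n → ℕ} (h : Reach G a x y) : dg a x = dg a y := by
  induction h with
  | refl => rfl
  | tail _ hstep ih => exact ih.trans (step_dg hstep)

/-- monomial multiples of elements of G -/
def TSet (G : Finset (MvPolynomial (Fin n) k)) : Set (MvPolynomial (Fin n) k) :=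
  {p | ∃ w : Fin n → ℕ, ∃ g ∈ G, p = mono k w * g}

lemma mono_mul_mem_spanT {G : Finset (MvPolynomial (Fin n) k)} (w : Fin n → ℕ)
    {q : MvPolynomial (Fin n) k} (hq : q ∈ Submodule.span k (TSet G)) :
    mono k w * q ∈ Submodule.span k (TSet G) := by
  induction hq using Submodule.span_induction with
  | mem p hp =>
    obtain ⟨w', g, hg, rfl⟩ := hp
    rw [← mul_assoc, mono_mul]
    exact Submodule.subset_span ⟨w + w', g, hg, rfl⟩
  | zero => rw [mul_zero]; exact zero_mem _
  | add p q _ _ hp hq => rw [mul_add]; exact add_mem hp hq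
  | smul c p _ hp => rw [mul_smul_comm]; exact Submodule.smul_mem _ c hp

lemma mul_mem_spanT {G : Finset (MvPolynomial (Fin n) k)} (h : MvPolynomial (Fin n) k)
    {q : MvPolynomial (Fin n) k} (hq : q ∈ Submodule.span k (TSet G)) :
    h * q ∈ Submodule.span k (TSet G) := by
  induction h using MvPolynomial.induction_on with
  | C c => rw [← MvPolynomial.smul_eq_C_mul]; exact Submodule.smul_mem _ c hq
  | add p q' hp hq' => rw [add_mul]; exact add_mem hp hq'
  | mul_X p i hp =>
    have hX : (MvPolynomial.X i : MvPolynomial (Fin n) k) = mono k (Pi.single i 1) := by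
      have hs : fsp (Pi.single i 1) = Finsupp.single i 1 := by
        ext j; simp [fsp_apply, Pi.single_apply, Finsupp.single_apply, eq_comm]
      rw [mono_def, hs]
      rfl
    have heq : p * MvPolynomial.X i * q = MvPolynomial.X i * (p * q) := by ring
    rw [heq, hX]
    exact mono_mul_mem_spanT _ hp

lemma ideal_span_le_spanT {G : Finset (MvPolynomial (Fin n) k)}
    {p : MvPolynomial (Fin n) k} (hp : p ∈ Ideal.span (G : Set (MvPolynomial (Fin n) k))) :
    p ∈ Submodule.span k (TSet G) := by
  induction hp using Submodule.span_induction with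
  | mem g hg =>
    refine Submodule.subset_span ⟨0, g, hg, ?_⟩
    rw [mono_zero, one_mul]
  | zero => exact zero_mem _
  | add p q _ _ hp hq => exact add_mem hp hq
  | smul h p _ hp => exact mul_mem_spanT h hp

lemma reach_of_binom_mem_span {kk : Type*} [Field kk] {G : Finset (MvPolynomial (Fin n) kk)}
    {a : Fin n → Fin d → ℕ}
    (hrep : ∀ g ∈ G, ∃ U V : Fin n → ℕ, GoodPair a g U V)
    {x y : Fin n → ℕ}
    (hmem : binom kk x y ∈ Ideal.span (G : Set (MvPolynomial (Fin n) kk)))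
    (hne : x ≠ y) : Reach G a x y := by
  by_contra hreach
  set Cs : Set (Fin n → ℕ) := {z | Reach G a x z} with hCs
  have hx : x ∈ Cs := Relation.ReflTransGen.refl
  have hy : y ∉ Cs := hreach
  have hvanish : ∀ p ∈ Submodule.span kk (TSet G), phi Cs p = 0 := by
    intro p hp
    induction hp using Submodule.span_induction with
    | mem q hq =>
      obtain ⟨w, g, hg, rfl⟩ := hq
      obtain ⟨U, V, hgood⟩ := hrep g hg
      rw [hgood.1, mono_mul_binom, phi_binom]
      have hstep : Step G a (U + w) (V + w) :=
        ⟨g, hg, U, V, w, hgood, Or.inl ⟨rfl, rfl⟩⟩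
      have hiff : (U + w ∈ Cs) ↔ (V + w ∈ Cs) :=
        ⟨fun h => Relation.ReflTransGen.tail h hstep,
         fun h => Relation.ReflTransGen.tail h (step_symm hstep)⟩
      by_cases h1 : U + w ∈ Cs
      · rw [if_pos h1, if_pos (hiff.mp h1), sub_self]
      · rw [if_neg h1, if_neg (fun h => h1 (hiff.mpr h)), sub_self]
    | zero => exact phi_zero Cs
    | add p q _ _ hp hq => rw [phi_add, hp, hq, add_zero]
    | smul c p _ hp => rw [phi_smul, hp, mul_zero]
  have h0 := hvanish _ (ideal_span_le_spanT hmem)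
  rw [phi_binom, if_pos hx, if_neg hy, sub_zero] at h0
  exact one_ne_zero h0


section Core

variable {n d : ℕ} (a : Fin n → Fin d → ℕ) (I : Fin n → Prop) (c : Fin d → ℕ)
variable (γ₁ γ₂ : Fin n → ℕ)

/-- The key binary relation: the two restrictions agree up to shifts by `γ₁`, `γ₂`. -/
def Rel (x y : Fin n → ℕ) : Prop :=
  (∃ α β : ℕ, rst I x + α • γ₁ = rst I y + β • γ₁) ∧
  (∃ α β : ℕ, rst (fun i => ¬ I i) x + α • γ₂ = rst (fun i => ¬ I i) y + β • γ₂)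

variable {a I c γ₁ γ₂}

lemma rel_refl (x : Fin n → ℕ) : Rel I γ₁ γ₂ x x :=
  ⟨⟨0, 0, rfl⟩, ⟨0, 0, rfl⟩⟩

lemma rel_symm {x y : Fin n → ℕ} (h : Rel I γ₁ γ₂ x y) : Rel I γ₁ γ₂ y x := by
  obtain ⟨⟨α, β, h1⟩, ⟨α', β', h2⟩⟩ := h
  exact ⟨⟨β, α, h1.symm⟩, ⟨β', α', h2.symm⟩⟩

lemma rel_trans {x y z : Fin n → ℕ} (h : Rel I γ₁ γ₂ x y) (h' : Rel I γ₁ γ₂ y z) :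
    Rel I γ₁ γ₂ x z := by
  obtain ⟨⟨α, β, h1⟩, ⟨α', β', h2⟩⟩ := h
  obtain ⟨⟨σ, τ, h1'⟩, ⟨σ', τ', h2'⟩⟩ := h'
  refine ⟨⟨α + σ, β + τ, ?_⟩, ⟨α' + σ', β' + τ', ?_⟩⟩
  · have := congrArg (· + σ • γ₁) h1
    calc rst I x + (α + σ) • γ₁ = rst I x + α • γ₁ + σ • γ₁ := by
          rw [add_smul, add_assoc]
      _ = rst I y + σ • γ₁ + β • γ₁ := by rw [h1]; ring
      _ = rst I z + τ • γ₁ + β • γ₁ := by rw [h1']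
      _ = rst I z + (β + τ) • γ₁ := by rw [add_smul]; ring
  · calc rst (fun i => ¬ I i) x + (α' + σ') • γ₂
        = rst (fun i => ¬ I i) x + α' • γ₂ + σ' • γ₂ := by rw [add_smul, add_assoc]
      _ = rst (fun i => ¬ I i) y + σ' • γ₂ + β' • γ₂ := by rw [h2]; ring
      _ = rst (fun i => ¬ I i) z + τ' • γ₂ + β' • γ₂ := by rw [h2']
      _ = rst (fun i => ¬ I i) z + (β' + τ') • γ₂ := by rw [add_smul]; ring

lemma rel_add {x y : Fin n → ℕ} (t : Fin n → ℕ) (h : Rel I γ₁ γ₂ x y) :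
    Rel I γ₁ γ₂ (x + t) (y + t) := by
  obtain ⟨⟨α, β, h1⟩, ⟨α', β', h2⟩⟩ := h
  refine ⟨⟨α, β, ?_⟩, ⟨α', β', ?_⟩⟩
  · rw [rst_add, rst_add]
    calc rst I x + rst I t + α • γ₁ = rst I x + α • γ₁ + rst I t := by ring
      _ = rst I y + β • γ₁ + rst I t := by rw [h1]
      _ = rst I y + rst I t + β • γ₁ := by ring
  · rw [rst_add, rst_add]
    calc rst (fun i => ¬ I i) x + rst (fun i => ¬ I i) t + α' • γ₂
        = rst (fun i => ¬ I i) x + α' • γ₂ + rst (fun i => ¬ I i) t := by ring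
      _ = rst (fun i => ¬ I i) y + β' • γ₂ + rst (fun i => ¬ I i) t := by rw [h2]
      _ = rst (fun i => ¬ I i) y + rst (fun i => ¬ I i) t + β' • γ₂ := by ring

lemma nsmul_cancel_of_ne_zero (hc0 : c ≠ 0) {α β : ℕ} (h : α • c = β • c) : α = β := by
  obtain ⟨j, hj⟩ := Function.ne_iff.mp hc0
  have := congrFun h j
  simp only [Pi.smul_apply, smul_eq_mul, Pi.zero_apply] at this hj
  exact Nat.eq_of_mul_eq_mul_right (Nat.pos_of_ne_zero hj) this

lemma dg_rst_compl (x : Fin n → ℕ) :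
    dg a (rst I x) + dg a (rst (fun i => ¬ I i) x) = dg a x := by
  rw [← dg_add, rst_compl]

/-- common-part reduction -/
lemma rel_of_common {x y : Fin n → ℕ}
    (IH : ∀ p q : Fin n → ℕ, dg a p = dg a q → wtd (dg a p) < wtd (dg a x) →
      Rel I γ₁ γ₂ p q)
    (ha0 : ∀ i, a i ≠ 0)
    (hfib : dg a x = dg a y) (hinf : ∃ i, min (x i) (y i) ≠ 0) :
    Rel I γ₁ γ₂ x y := by
  set infv : Fin n → ℕ := fun i => min (x i) (y i) with hinfv
  set x' : Fin n → ℕ := fun i => x i - infv i with hx'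
  set y' : Fin n → ℕ := fun i => y i - infv i with hy'
  have hxx : x = x' + infv := by
    funext i; simp only [hx', hinfv, Pi.add_apply]; omega
  have hyy : y = y' + infv := by
    funext i; simp only [hy', hinfv, Pi.add_apply]; omega
  have hinf0 : infv ≠ 0 := by
    obtain ⟨i, hi⟩ := hinf
    intro h0
    exact hi (congrFun h0 i)
  have hdx : dg a x = dg a x' + dg a infv := by rw [hxx, dg_add]
  have hdy : dg a y = dg a y' + dg a infv := by rw [hyy, dg_add]
  have hfib' : dg a x' = dg a y' := by
    have : dg a x' + dg a infv = dg a y' + dg a infv := by rw [← hdx, ← hdy, hfib]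
    exact add_right_cancel this
  have hwt : wtd (dg a x') < wtd (dg a x) := by
    rw [hdx, wtd_add]
    have := wtd_dg_pos ha0 hinf0
    omega
  have := rel_add infv (IH x' y' hfib' hwt)
  rwa [← hxx, ← hyy] at this

/-- oriented disjoint edge case -/
lemma rel_edge_oriented {x y : Fin n → ℕ} {mn : ℕ}
    (ha0 : ∀ i, a i ≠ 0) (hc0 : c ≠ 0)
    (hI1 : ∃ i, I i) (hI2 : ∃ i, ¬ I i)
    (hγ₁supp : rst I γ₁ = γ₁) (hγ₁deg : dg a γ₁ = c) (hγ₁full : ∀ i, I i → γ₁ i ≠ 0)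
    (hγ₂supp : rst (fun i => ¬ I i) γ₂ = γ₂) (hγ₂deg : dg a γ₂ = c)
    (hγ₂full : ∀ i, ¬ I i → γ₂ i ≠ 0)
    (IH : ∀ p q : Fin n → ℕ, dg a p = dg a q → wtd (dg a p) < wtd (dg a x) →
      Rel I γ₁ γ₂ p q)
    (hfib : dg a x = dg a y) (hne : x ≠ y)
    (hdisj : ∀ i, x i = 0 ∨ y i = 0)
    (hfull : ∀ i, x i ≠ 0 ∨ y i ≠ 0)
    (hor : dg a (rst I x) = dg a (rst I y) + mn • c) :
    Rel I γ₁ γ₂ x y := by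
  classical
  set x1 := rst I x with hx1def
  set x2 := rst (fun i => ¬ I i) x with hx2def
  set y1 := rst I y with hy1def
  set y2 := rst (fun i => ¬ I i) y with hy2def
  have hxc : x1 + x2 = x := rst_compl I x
  have hyc : y1 + y2 = y := rst_compl I y
  have hdx : dg a x1 + dg a x2 = dg a x := dg_rst_compl x
  have hdy : dg a y1 + dg a y2 = dg a y := dg_rst_compl y
  have hb0 : dg a x ≠ 0 := by
    intro h0
    have hx0 : x = 0 := dg_eq_zero ha0 h0
    have hy0 : y = 0 := dg_eq_zero ha0 (hfib ▸ h0)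
    exact hne (hx0.trans hy0.symm)
  have hory : dg a y2 = dg a x2 + mn • c := by
    have h1 : dg a y1 + mn • c + dg a x2 = dg a y1 + dg a y2 := by
      rw [← hor, hdx, hdy, hfib]
    have h2 : dg a y1 + (mn • c + dg a x2) = dg a y1 + dg a y2 := by
      rw [← h1]; ring
    have := add_left_cancel h2
    rw [← this]; ring
  -- restriction identities
  have hrx1 : rst I x1 = x1 := rst_idem I x
  have hrx2 : rst (fun i => ¬ I i) x2 = x2 := rst_idem _ x
  have hry1 : rst I y1 = y1 := rst_idem I y
  have hry2 : rst (fun i => ¬ I i) y2 = y2 := rst_idem _ y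
  have hrx1c : rst (fun i => ¬ I i) x1 = 0 := by
    funext i; by_cases h : I i <;> simp [hx1def, rst, h]
  have hry1c : rst (fun i => ¬ I i) y1 = 0 := by
    funext i; by_cases h : I i <;> simp [hy1def, rst, h]
  have hrx2c : rst I x2 = 0 := by
    funext i; by_cases h : I i <;> simp [hx2def, rst, h]
  have hry2c : rst I y2 = 0 := by
    funext i; by_cases h : I i <;> simp [hy2def, rst, h]
  have hγ₁c : rst (fun i => ¬ I i) γ₁ = 0 := (rst_compl_eq_zero_iff I γ₁).mpr hγ₁supp
  have hγ₂c : rst I γ₂ = 0 := by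
    funext i
    by_cases h : I i
    · have := congrFun hγ₂supp i
      rw [rst_apply_of_not _ _ (by simpa using h)] at this
      simp [rst, h, ← this]
    · simp [rst, h]
  have hx1I : ∀ i, I i → x1 i = x i := fun i hi => rst_apply_of I x hi
  have hx2I : ∀ i, ¬ I i → x2 i = x i := fun i hi => rst_apply_of _ x (by simpa using hi)
  have hy1I : ∀ i, I i → y1 i = y i := fun i hi => rst_apply_of I y hi
  have hy2I : ∀ i, ¬ I i → y2 i = y i := fun i hi => rst_apply_of _ y (by simpa using hi)
  by_cases hmn : mn = 0
  · -- the balanced case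
    subst hmn
    simp only [zero_smul, add_zero] at hor hory
    by_cases hx2z : x2 = 0
    · -- then y2 = 0 and full support fails on the complement of I
      have hy2z : y2 = 0 := by
        have : dg a y2 = 0 := by rw [hory, hx2z, dg_zero]
        exact dg_eq_zero ha0 this
      obtain ⟨i, hi⟩ := hI2
      rcases hfull i with h | h
      · exact absurd (by rw [← hx2I i hi, hx2z]; rfl) h
      · exact absurd (by rw [← hy2I i hi, hy2z]; rfl) h
    · by_cases hx1z : x1 = 0
      · have hy1z : y1 = 0 := by
          have : dg a y1 = 0 := by rw [← hor, hx1z, dg_zero]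
          exact dg_eq_zero ha0 this
        obtain ⟨i, hi⟩ := hI1
        rcases hfull i with h | h
        · exact absurd (by rw [← hx1I i hi, hx1z]; rfl) h
        · exact absurd (by rw [← hy1I i hi, hy1z]; rfl) h
      · -- all four parts nonzero
        have hwt1 : wtd (dg a x1) < wtd (dg a x) := by
          rw [← hdx, wtd_add]
          have := wtd_dg_pos ha0 hx2z
          omega
        have hwt2 : wtd (dg a x2) < wtd (dg a x) := by
          rw [← hdx, wtd_add]
          have := wtd_dg_pos ha0 hx1z
          omega
        obtain ⟨⟨α, β, h1⟩, -⟩ := IH x1 y1 hor hwt1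
        obtain ⟨-, ⟨α', β', h2⟩⟩ := IH x2 y2 hory.symm hwt2
        rw [hrx1, hry1] at h1
        rw [hrx2, hry2] at h2
        exact ⟨⟨α, β, h1⟩, ⟨α', β', h2⟩⟩
  · -- mn ≥ 1
    have hmc0 : mn • c ≠ 0 := by
      intro h
      obtain ⟨j, hj⟩ := Function.ne_iff.mp hc0
      have := congrFun h j
      simp only [Pi.smul_apply, smul_eq_mul, Pi.zero_apply] at this hj
      rcases Nat.mul_eq_zero.mp this with h' | h'
      exacts [hmn h', hj h']
    have hdγ1 : dg a (mn • γ₁) = mn • c := by rw [dg_nsmul, hγ₁deg]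
    have hdγ2 : dg a (mn • γ₂) = mn • c := by rw [dg_nsmul, hγ₂deg]
    by_cases hx2z : x2 = 0
    · have hbx1 : dg a x1 = dg a x := by rw [← hdx, hx2z, dg_zero, add_zero]
      by_cases hy1z : y1 = 0
      · -- A12 : x = mn•γ₁, y = mn•γ₂
        have hxx : x = x1 := by rw [← hxc, hx2z, add_zero]
        have hyy : y = y2 := by rw [← hyc, hy1z, zero_add]
        have hbmc : dg a x = mn • c := by
          rw [← hbx1, hor, hy1z, dg_zero, zero_add]
        -- x = mn • γ₁
        have hrel1 : Rel I γ₁ γ₂ x (mn • γ₁) := by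
          apply rel_of_common IH ha0 (by rw [hdγ1, hbmc])
          obtain ⟨i, hi⟩ := hI1
          refine ⟨i, ?_⟩
          have h1 : x i ≠ 0 := by
            rcases hfull i with h | h
            · exact h
            · exfalso; apply h; rw [← hy1I i hi, hy1z]; rfl
          have h2 : (mn • γ₁) i ≠ 0 := by
            simp only [Pi.smul_apply, smul_eq_mul]
            exact Nat.mul_ne_zero hmn (hγ₁full i hi)
          omega
        have hx1γ : x1 = mn • γ₁ := by
          obtain ⟨⟨α, β, h1⟩, -⟩ := hrel1
          have hrst : rst I (mn • γ₁) = mn • γ₁ := by rw [rst_nsmul, hγ₁supp]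
          rw [hrst, ← hx1def] at h1
          have hdg := congrArg (dg a) h1
          simp only [dg_add, dg_nsmul] at hdg
          rw [hγ₁deg, hbx1, hbmc] at hdg
          have hab : α = β := nsmul_cancel_of_ne_zero hc0 (add_left_cancel hdg)
          subst hab
          exact add_right_cancel h1
        have hrel2 : Rel I γ₁ γ₂ y (mn • γ₂) := by
          apply rel_of_common (x := y) ?_ ha0 (by rw [hdγ2, ← hfib, hbmc])
          · obtain ⟨i, hi⟩ := hI2
            refine ⟨i, ?_⟩
            have h1 : y i ≠ 0 := by
              rcases hfull i with h | h
              · exfalso; apply h; rw [← hx2I i hi, hx2z]; rfl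
              · exact h
            have h2 : (mn • γ₂) i ≠ 0 := by
              simp only [Pi.smul_apply, smul_eq_mul]
              exact Nat.mul_ne_zero hmn (hγ₂full i hi)
            omega
          · intro p q h hw
            exact IH p q h (by rwa [← hfib] at hw)
        have hy2γ : y2 = mn • γ₂ := by
          obtain ⟨-, ⟨α, β, h2⟩⟩ := hrel2
          have hrst : rst (fun i => ¬ I i) (mn • γ₂) = mn • γ₂ := by
            rw [rst_nsmul, hγ₂supp]
          rw [hrst, ← hy2def] at h2
          have hdg := congrArg (dg a) h2
          simp only [dg_add, dg_nsmul] at hdg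
          have hdgy2 : dg a y2 = mn • c := by
            rw [hory, hx2z, dg_zero, zero_add]
          rw [hγ₂deg, hdgy2] at hdg
          have hab : α = β := nsmul_cancel_of_ne_zero hc0 (add_left_cancel hdg)
          subst hab
          exact add_right_cancel h2
        refine ⟨⟨0, mn, ?_⟩, ⟨mn, 0, ?_⟩⟩
        · rw [← hx1def, ← hy1def, hx1γ, hy1z, zero_smul, add_zero, zero_add]
        · rw [← hx2def, ← hy2def, hy2γ, hx2z, zero_smul, add_zero, zero_add]
      · -- A1 : x pure side-1, y properly mixed
        have hy2z : y2 ≠ 0 := by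
          intro h
          have : dg a y2 = 0 := by rw [h, dg_zero]
          rw [hory, hx2z, dg_zero, zero_add] at this
          exact hmc0 this
        have hdgy2 : dg a y2 = mn • c := by rw [hory, hx2z, dg_zero, zero_add]
        have hwty2 : wtd (dg a y2) < wtd (dg a x) := by
          rw [hfib, ← hdy, wtd_add]
          have := wtd_dg_pos ha0 hy1z
          omega
        have hy2γ : y2 = mn • γ₂ := by
          obtain ⟨-, ⟨α, β, h2⟩⟩ := IH y2 (mn • γ₂) (by rw [hdgy2, hdγ2]) hwty2
          rw [hry2] at h2
          have hrst : rst (fun i => ¬ I i) (mn • γ₂) = mn • γ₂ := by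
            rw [rst_nsmul, hγ₂supp]
          rw [hrst] at h2
          have hdg := congrArg (dg a) h2
          simp only [dg_add, dg_nsmul] at hdg
          rw [hγ₂deg, hdgy2] at hdg
          have hab : α = β := nsmul_cancel_of_ne_zero hc0 (add_left_cancel hdg)
          subst hab
          exact add_right_cancel h2
        set z₁ : Fin n → ℕ := y1 + mn • γ₁ with hz₁def
        have hdz₁ : dg a z₁ = dg a x := by
          rw [hz₁def, dg_add, dg_nsmul, hγ₁deg, ← hor, hbx1]
        have hrelz₁y : Rel I γ₁ γ₂ z₁ y := by
          refine ⟨⟨0, mn, ?_⟩, ⟨mn, 0, ?_⟩⟩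
          · rw [hz₁def, rst_add, rst_nsmul, hγ₁supp, hry1, ← hy1def, zero_smul, add_zero]
          · rw [hz₁def, rst_add, rst_nsmul, hγ₁c, hry1c, ← hy2def, hy2γ]
            simp
        have hrelxz₁ : Rel I γ₁ γ₂ x z₁ := by
          by_cases hxz : x = z₁
          · rw [hxz]; exact rel_refl _
          · by_cases hinf : ∃ i, min (x i) (z₁ i) ≠ 0
            · exact rel_of_common IH ha0 hdz₁.symm hinf
            · exfalso
              push_neg at hinf
              have hx1z : x1 = 0 := by
                funext i
                by_cases hi : I i
                · have h2 : z₁ i ≠ 0 := by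
                    simp only [hz₁def, Pi.add_apply, Pi.smul_apply, smul_eq_mul]
                    have := Nat.mul_ne_zero hmn (hγ₁full i hi)
                    omega
                  have := hinf i
                  have hx0 : x i = 0 := by omega
                  rw [hx1def, rst_apply_of I x hi, hx0]; rfl
                · rw [hx1def, rst_apply_of_not I x hi]; rfl
              apply hb0
              rw [← hbx1, hx1z, dg_zero]
        exact rel_trans (rel_trans hrelxz₁ hrelz₁y) (rel_refl y)
    · by_cases hy1z : y1 = 0
      · -- A2 : y pure side-2, x properly mixed
        have hdx1 : dg a x1 = mn • c := by rw [hor, hy1z, dg_zero, zero_add]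
        have hwtx1 : wtd (dg a x1) < wtd (dg a x) := by
          rw [← hdx, wtd_add]
          have := wtd_dg_pos ha0 hx2z
          omega
        have hx1γ : x1 = mn • γ₁ := by
          obtain ⟨⟨α, β, h1⟩, -⟩ := IH x1 (mn • γ₁) (by rw [hdx1, hdγ1]) hwtx1
          rw [hrx1] at h1
          have hrst : rst I (mn • γ₁) = mn • γ₁ := by rw [rst_nsmul, hγ₁supp]
          rw [hrst] at h1
          have hdg := congrArg (dg a) h1
          simp only [dg_add, dg_nsmul] at hdg
          rw [hγ₁deg, hdx1] at hdg
          have hab : α = β := nsmul_cancel_of_ne_zero hc0 (add_left_cancel hdg)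
          subst hab
          exact add_right_cancel h1
        have hconj1 : ∃ α β : ℕ, rst I x + α • γ₁ = rst I y + β • γ₁ := by
          refine ⟨0, mn, ?_⟩
          rw [← hx1def, ← hy1def, hx1γ, hy1z, zero_smul, add_zero, zero_add]
        set yv : Fin n → ℕ := x2 + mn • γ₂ with hyvdef
        have hdyv : dg a yv = dg a y := by
          rw [hyvdef, dg_add, hdγ2, ← hory, ← hdy, hy1z, dg_zero, zero_add]
        have hyy : y = y2 := by rw [← hyc, hy1z, zero_add]
        have hconj2 : ∃ α β : ℕ,
            rst (fun i => ¬ I i) x + α • γ₂ = rst (fun i => ¬ I i) y + β • γ₂ := by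
          by_cases hyveq : yv = y
          · refine ⟨mn, 0, ?_⟩
            rw [← hx2def, ← hy2def, zero_smul, add_zero, ← hyy, ← hyveq, hyvdef]
          · by_cases hinf : ∃ i, min (yv i) (y i) ≠ 0
            · have IH' : ∀ p q : Fin n → ℕ, dg a p = dg a q →
                  wtd (dg a p) < wtd (dg a yv) → Rel I γ₁ γ₂ p q := by
                intro p q h hw
                apply IH p q h
                rwa [hdyv, ← hfib] at hw
              have hrel := rel_of_common (x := yv) (y := y) IH' ha0 hdyv hinf
              obtain ⟨-, ⟨α, β, h2⟩⟩ := hrel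
              have hryv : rst (fun i => ¬ I i) yv = yv := by
                rw [hyvdef, rst_add, rst_nsmul, hγ₂supp, hrx2]
              rw [hryv, hyvdef] at h2
              refine ⟨mn + α, β, ?_⟩
              rw [← hx2def, add_smul]
              calc x2 + (mn • γ₂ + α • γ₂) = x2 + mn • γ₂ + α • γ₂ := by ring
                _ = rst (fun i => ¬ I i) y + β • γ₂ := h2
            · exfalso
              push_neg at hinf
              have hy2zz : y2 = 0 := by
                funext i
                by_cases hi : I i
                · rw [hy2def, rst_apply_of_not _ y (by simpa using hi)]; rfl
                · have h2 : yv i ≠ 0 := by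
                    simp only [hyvdef, Pi.add_apply, Pi.smul_apply, smul_eq_mul]
                    have := Nat.mul_ne_zero hmn (hγ₂full i hi)
                    omega
                  have := hinf i
                  have hy0 : y i = 0 := by omega
                  rw [hy2def, rst_apply_of _ y (by simpa using hi), hy0]; rfl
              have : dg a y2 = 0 := by rw [hy2zz, dg_zero]
              rw [hory] at this
              apply hmc0
              funext j
              have h2 := congrFun this j
              simp only [Pi.add_apply, Pi.zero_apply] at h2 ⊢
              omega
        exact ⟨hconj1, hconj2⟩
      · -- both properly mixed
        have hwtx1 : wtd (dg a x1) < wtd (dg a x) := by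
          rw [← hdx, wtd_add]
          have := wtd_dg_pos ha0 hx2z
          omega
        have hwty2 : wtd (dg a y2) < wtd (dg a x) := by
          rw [hfib, ← hdy, wtd_add]
          have := wtd_dg_pos ha0 hy1z
          omega
        have hconj1 : ∃ α β : ℕ, rst I x + α • γ₁ = rst I y + β • γ₁ := by
          have hfib1 : dg a x1 = dg a (y1 + mn • γ₁) := by
            rw [dg_add, dg_nsmul, hγ₁deg, hor]
          obtain ⟨⟨α, β, h1⟩, -⟩ := IH x1 (y1 + mn • γ₁) hfib1 hwtx1
          rw [hrx1] at h1
          have hrst : rst I (y1 + mn • γ₁) = y1 + mn • γ₁ := by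
            rw [rst_add, rst_nsmul, hγ₁supp, hry1]
          rw [hrst] at h1
          refine ⟨α, mn + β, ?_⟩
          rw [← hx1def, ← hy1def, add_smul]
          calc x1 + α • γ₁ = y1 + mn • γ₁ + β • γ₁ := h1
            _ = y1 + (mn • γ₁ + β • γ₁) := by ring
        have hconj2 : ∃ α β : ℕ,
            rst (fun i => ¬ I i) x + α • γ₂ = rst (fun i => ¬ I i) y + β • γ₂ := by
          have hfib2 : dg a y2 = dg a (x2 + mn • γ₂) := by
            rw [dg_add, dg_nsmul, hγ₂deg, hory]
          obtain ⟨-, ⟨α, β, h2⟩⟩ := IH y2 (x2 + mn • γ₂) hfib2 hwty2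
          rw [hry2] at h2
          have hrst : rst (fun i => ¬ I i) (x2 + mn • γ₂) = x2 + mn • γ₂ := by
            rw [rst_add, rst_nsmul, hγ₂supp, hrx2]
          rw [hrst] at h2
          refine ⟨mn + β, α, ?_⟩
          rw [← hx2def, ← hy2def, add_smul]
          calc x2 + (mn • γ₂ + β • γ₂) = x2 + mn • γ₂ + β • γ₂ := by ring
            _ = y2 + α • γ₂ := h2.symm
        exact ⟨hconj1, hconj2⟩


lemma rel_of_step_core
    (ha0 : ∀ i, a i ≠ 0) (hc0 : c ≠ 0)
    (hI1 : ∃ i, I i) (hI2 : ∃ i, ¬ I i)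
    (hγ₁supp : rst I γ₁ = γ₁) (hγ₁deg : dg a γ₁ = c) (hγ₁full : ∀ i, I i → γ₁ i ≠ 0)
    (hγ₂supp : rst (fun i => ¬ I i) γ₂ = γ₂) (hγ₂deg : dg a γ₂ = c)
    (hγ₂full : ∀ i, ¬ I i → γ₂ i ≠ 0)
    (hsplit : ∀ x y : Fin n → ℕ, dg a x = dg a y → ∃ mn : ℕ,
      dg a (rst I x) = dg a (rst I y) + mn • c ∨
      dg a (rst I y) = dg a (rst I x) + mn • c)
    (U V w : Fin n → ℕ)
    (hfullUV : ∀ l, U l ≠ 0 ∨ V l ≠ 0) (hdgUV : dg a U = dg a V)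
    (IH : ∀ p q : Fin n → ℕ, dg a p = dg a q → wtd (dg a p) < wtd (dg a (U + w)) →
      Rel I γ₁ γ₂ p q) :
    Rel I γ₁ γ₂ (U + w) (V + w) := by
  have hfib : dg a (U + w) = dg a (V + w) := by rw [dg_add, dg_add, hdgUV]
  by_cases hUV : U = V
  · subst hUV; exact rel_refl _
  · by_cases hinf : ∃ i, min ((U + w) i) ((V + w) i) ≠ 0
    · exact rel_of_common IH ha0 hfib hinf
    · push_neg at hinf
      have hw0 : w = 0 := by
        funext i
        have := hinf i
        simp only [Pi.add_apply] at this
        simp only [Pi.zero_apply]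
        omega
      subst hw0
      rw [add_zero] at IH ⊢
      have hfib' : dg a U = dg a V := hdgUV
      have hdisj : ∀ i, U i = 0 ∨ V i = 0 := by
        intro i
        have := hinf i
        simp only [Pi.add_apply, Pi.zero_apply, add_zero] at this
        omega
      obtain ⟨mn, hO | hO⟩ := hsplit U V hfib'
      · exact rel_edge_oriented ha0 hc0 hI1 hI2 hγ₁supp hγ₁deg hγ₁full hγ₂supp hγ₂deg
          hγ₂full IH hfib' hUV hdisj hfullUV hO
      · refine rel_symm (rel_edge_oriented ha0 hc0 hI1 hI2 hγ₁supp hγ₁deg hγ₁full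
          hγ₂supp hγ₂deg hγ₂full ?_ hfib'.symm (Ne.symm hUV)
          (fun i => (hdisj i).symm) (fun i => (hfullUV i).symm) hO)
        intro p q h hw
        simp only [add_zero] at hw
        apply IH p q h
        rwa [hfib']

lemma claim_rel {kk : Type*} [Field kk] {G : Finset (MvPolynomial (Fin n) kk)}
    (ha0 : ∀ i, a i ≠ 0) (hc0 : c ≠ 0)
    (hI1 : ∃ i, I i) (hI2 : ∃ i, ¬ I i)
    (hγ₁supp : rst I γ₁ = γ₁) (hγ₁deg : dg a γ₁ = c) (hγ₁full : ∀ i, I i → γ₁ i ≠ 0)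
    (hγ₂supp : rst (fun i => ¬ I i) γ₂ = γ₂) (hγ₂deg : dg a γ₂ = c)
    (hγ₂full : ∀ i, ¬ I i → γ₂ i ≠ 0)
    (hsplit : ∀ x y : Fin n → ℕ, dg a x = dg a y → ∃ mn : ℕ,
      dg a (rst I x) = dg a (rst I y) + mn • c ∨
      dg a (rst I y) = dg a (rst I x) + mn • c)
    (hspan : Ideal.span (G : Set (MvPolynomial (Fin n) kk)) = toricIdeal kk a)
    (hrep : ∀ g ∈ G, ∃ U V : Fin n → ℕ, GoodPair a g U V) :
    ∀ (W : ℕ) (x y : Fin n → ℕ), dg a x = dg a y → wtd (dg a x) < W →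
      Rel I γ₁ γ₂ x y := by
  intro W
  induction W with
  | zero => exact fun x y _ h => absurd h (Nat.not_lt_zero _)
  | succ W ihW =>
    intro x y hxy hwt
    by_cases hne : x = y
    · subst hne; exact rel_refl x
    have hmem : binom kk x y ∈ Ideal.span (G : Set (MvPolynomial (Fin n) kk)) := by
      rw [hspan]
      exact (binom_mem_toricIdeal_iff a x y).mpr hxy
    have hreach := reach_of_binom_mem_span hrep hmem hne
    have hrel : ∀ z, Reach G a x z → Rel I γ₁ γ₂ x z := by
      intro z hz
      induction hz with
      | refl => exact rel_refl x
      | @tail b z hxb hstep ih =>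
        have hdgb : dg a x = dg a b := reach_dg hxb
        obtain ⟨g, hg, U, V, w, ⟨-, hfullUV, hdgUV⟩, hor⟩ := hstep
        have hIHb : ∀ p q : Fin n → ℕ, dg a p = dg a q →
            wtd (dg a p) < wtd (dg a b) → Rel I γ₁ γ₂ p q := by
          intro p q h hw
          apply ihW p q h
          rw [← hdgb] at hw
          omega
        refine rel_trans ih ?_
        rcases hor with ⟨rfl, rfl⟩ | ⟨rfl, rfl⟩
        · exact rel_of_step_core ha0 hc0 hI1 hI2 hγ₁supp hγ₁deg hγ₁full hγ₂supp hγ₂deg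
            hγ₂full hsplit U V w hfullUV hdgUV hIHb
        · exact rel_of_step_core ha0 hc0 hI1 hI2 hγ₁supp hγ₁deg hγ₁full hγ₂supp hγ₂deg
            hγ₂full hsplit V U w (fun l => (hfullUV l).symm) hdgUV.symm hIHb
    exact hrel y hreach

lemma exists_gen_pair {kk : Type*} [Field kk] {G : Finset (MvPolynomial (Fin n) kk)}
    {x y : Fin n → ℕ} (h : Reach G a x y) (hne : x ≠ y) :
    ∃ U V w : Fin n → ℕ, (∃ g ∈ G, GoodPair a g U V) ∧ U ≠ V ∧
      dg a x = dg a U + dg a w := by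
  induction h using Relation.ReflTransGen.head_induction_on with
  | refl => exact absurd rfl hne
  | @head p q hstep htail ih =>
    obtain ⟨g, hg, U, V, w, hgood, hor⟩ := hstep
    by_cases hUV : U = V
    · have hpq : p = q := by
        rcases hor with ⟨rfl, rfl⟩ | ⟨rfl, rfl⟩
        · rw [hUV]
        · rw [hUV]
      by_cases hqy : q = y
      · exact absurd (hpq.trans hqy) hne
      · obtain ⟨U', V', w', h1, h2, h3⟩ := ih hqy
        exact ⟨U', V', w', h1, h2, by rw [hpq]; exact h3⟩
    · refine ⟨U, V, w, ⟨g, hg, hgood⟩, hUV, ?_⟩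
      rcases hor with ⟨rfl, -⟩ | ⟨rfl, -⟩
      · rw [dg_add]
      · rw [dg_add, hgood.2.2]

lemma stage1 {kk : Type*} [Field kk] {G : Finset (MvPolynomial (Fin n) kk)}
    (ha0 : ∀ i, a i ≠ 0)
    (hI1 : ∃ i, I i) (hI2 : ∃ i, ¬ I i)
    (hsplit : ∀ x y : Fin n → ℕ, dg a x = dg a y → ∃ mn : ℕ,
      dg a (rst I x) = dg a (rst I y) + mn • c ∨
      dg a (rst I y) = dg a (rst I x) + mn • c)
    (hspan : Ideal.span (G : Set (MvPolynomial (Fin n) kk)) = toricIdeal kk a)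
    (hrep : ∀ g ∈ G, ∃ U V : Fin n → ℕ, GoodPair a g U V)
    (hcf1 : ∃ γ : Fin n → ℕ, rst I γ = γ ∧ dg a γ = c)
    (hcf2 : ∃ γ : Fin n → ℕ, rst (fun i => ¬ I i) γ = γ ∧ dg a γ = c)
    {u0 v0 : Fin n → ℕ} (hne0 : u0 ≠ v0) (hfib0 : dg a u0 = dg a v0) :
    c ≠ 0 ∧
      (∃ γ₁ : Fin n → ℕ, rst I γ₁ = γ₁ ∧ dg a γ₁ = c ∧ ∀ i, I i → γ₁ i ≠ 0) ∧
      (∃ γ₂ : Fin n → ℕ, rst (fun i => ¬ I i) γ₂ = γ₂ ∧ dg a γ₂ = c ∧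
        ∀ i, ¬ I i → γ₂ i ≠ 0) := by
  classical
  -- minimal weight of a fiber containing two distinct factorizations
  have hex : ∃ W : ℕ, ∃ u v : Fin n → ℕ, u ≠ v ∧ dg a u = dg a v ∧ wtd (dg a u) = W :=
    ⟨wtd (dg a u0), u0, v0, hne0, hfib0, rfl⟩
  set Wstar := Nat.find hex with hWdef
  obtain ⟨us, vs, hnes, hfibs, hwts⟩ := Nat.find_spec hex
  have hmin : ∀ u v : Fin n → ℕ, u ≠ v → dg a u = dg a v → Wstar ≤ wtd (dg a u) := by
    intro u v hu hf
    by_contra hlt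
    push_neg at hlt
    exact Nat.find_min hex hlt ⟨u, v, hu, hf, rfl⟩
  have hdisjmin : ∀ u v : Fin n → ℕ, u ≠ v → dg a u = dg a v →
      wtd (dg a u) = Wstar → ∀ i, u i = 0 ∨ v i = 0 := by
    intro u v hu hf hw i
    by_contra hcon
    push_neg at hcon
    set e : Fin n → ℕ := Pi.single i 1 with hedef
    have he0 : e ≠ 0 := by
      intro h
      have := congrFun h i
      simp [hedef] at this
    set u' : Fin n → ℕ := fun j => u j - e j with hu'def
    set v' : Fin n → ℕ := fun j => v j - e j with hv'def
    have huu : u = u' + e := by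
      funext j
      simp only [hu'def, Pi.add_apply, hedef, Pi.single_apply]
      by_cases hji : j = i
      · subst hji; simp only [if_pos rfl, eq_self_iff_true, if_true]; have := hcon.1; omega
      · simp [hji]
    have hvv : v = v' + e := by
      funext j
      simp only [hv'def, Pi.add_apply, hedef, Pi.single_apply]
      by_cases hji : j = i
      · subst hji; simp only [if_pos rfl, eq_self_iff_true, if_true]; have := hcon.2; omega
      · simp [hji]
    have hne' : u' ≠ v' := by
      intro h
      apply hu
      rw [huu, hvv, h]
    have hfib' : dg a u' = dg a v' := by
      have : dg a u' + dg a e = dg a v' + dg a e := by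
        rw [← dg_add, ← dg_add, ← huu, ← hvv, hf]
      exact add_right_cancel this
    have hwt' : wtd (dg a u') < Wstar := by
      have h1 : wtd (dg a u) = wtd (dg a u') + wtd (dg a e) := by
        rw [huu, dg_add, wtd_add]
      have h2 := wtd_dg_pos ha0 he0
      omega
    exact absurd (hmin u' v' hne' hfib') (by omega)
  -- extract a full-support generator pair in a minimal fiber
  have hmem : binom kk us vs ∈ Ideal.span (G : Set (MvPolynomial (Fin n) kk)) := by
    rw [hspan]
    exact (binom_mem_toricIdeal_iff a us vs).mpr hfibs
  obtain ⟨U, V, w, ⟨g, hg, -, hfullUV, hdgUV⟩, hUV, hdgx⟩ :=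
    exists_gen_pair (reach_of_binom_mem_span hrep hmem hnes) hnes
  have hwtU : wtd (dg a U) = Wstar := by
    have h1 : Wstar ≤ wtd (dg a U) := hmin U V hUV hdgUV
    have h2 : wtd (dg a U) ≤ Wstar := by
      have := congrArg wtd hdgx
      rw [wtd_add] at this
      omega
    omega
  have hdisj : ∀ i, U i = 0 ∨ V i = 0 := hdisjmin U V hUV hdgUV hwtU
  -- now run the core analysis, symmetric in the two orientations
  obtain ⟨mn, hor⟩ := hsplit U V hdgUV
  have main : ∀ X Y : Fin n → ℕ, X ≠ Y → dg a X = dg a Y →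
      wtd (dg a X) = Wstar → (∀ i, X i = 0 ∨ Y i = 0) →
      (∀ i, X i ≠ 0 ∨ Y i ≠ 0) →
      ∀ mn' : ℕ, dg a (rst I X) = dg a (rst I Y) + mn' • c →
      c ≠ 0 ∧
        (∃ γ₁ : Fin n → ℕ, rst I γ₁ = γ₁ ∧ dg a γ₁ = c ∧ ∀ i, I i → γ₁ i ≠ 0) ∧
        (∃ γ₂ : Fin n → ℕ, rst (fun i => ¬ I i) γ₂ = γ₂ ∧ dg a γ₂ = c ∧
          ∀ i, ¬ I i → γ₂ i ≠ 0) := by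
    intro X Y hXY hfibXY hwtX hdisjXY hfullXY mn' hor'
    set X1 := rst I X with hX1def
    set X2 := rst (fun i => ¬ I i) X with hX2def
    set Y1 := rst I Y with hY1def
    set Y2 := rst (fun i => ¬ I i) Y with hY2def
    have hXc : X1 + X2 = X := rst_compl I X
    have hYc : Y1 + Y2 = Y := rst_compl I Y
    have hdX : dg a X1 + dg a X2 = dg a X := dg_rst_compl X
    have hdY : dg a Y1 + dg a Y2 = dg a Y := dg_rst_compl Y
    have hory' : dg a Y2 = dg a X2 + mn' • c := by
      have h1 : dg a Y1 + mn' • c + dg a X2 = dg a Y1 + dg a Y2 := by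
        rw [← hor', hdX, hdY, hfibXY]
      have h2 : dg a Y1 + (mn' • c + dg a X2) = dg a Y1 + dg a Y2 := by
        rw [← h1]; ring
      have h3 := add_left_cancel h2
      rw [← h3]; ring
    have hX1I : ∀ i, I i → X1 i = X i := fun i hi => rst_apply_of I X hi
    have hX1In : ∀ i, ¬ I i → X1 i = 0 := fun i hi => rst_apply_of_not I X hi
    have hX2I : ∀ i, ¬ I i → X2 i = X i := fun i hi => rst_apply_of _ X (by simpa using hi)
    have hX2In : ∀ i, I i → X2 i = 0 := fun i hi => rst_apply_of_not _ X (by simpa using hi)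
    have hY1I : ∀ i, I i → Y1 i = Y i := fun i hi => rst_apply_of I Y hi
    have hY1In : ∀ i, ¬ I i → Y1 i = 0 := fun i hi => rst_apply_of_not I Y hi
    have hY2I : ∀ i, ¬ I i → Y2 i = Y i := fun i hi => rst_apply_of _ Y (by simpa using hi)
    have hY2In : ∀ i, I i → Y2 i = 0 := fun i hi => rst_apply_of_not _ Y (by simpa using hi)
    by_cases hmc : mn' • c = 0
    · exfalso
      rw [hmc, add_zero] at hor' hory'
      by_cases hX2z : X2 = 0
      · have hY2z : Y2 = 0 := dg_eq_zero ha0 (by rw [hory', hX2z, dg_zero])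
        obtain ⟨i, hi⟩ := hI2
        have hXi : X i = 0 := by
          have := congrFun hXc i
          have h1 := hX1In i hi
          have h2 := congrFun hX2z i
          simp only [Pi.add_apply, Pi.zero_apply] at this h2
          omega
        have hYi : Y i = 0 := by
          have := congrFun hYc i
          have h1 := hY1In i hi
          have h2 := congrFun hY2z i
          simp only [Pi.add_apply, Pi.zero_apply] at this h2
          omega
        rcases hfullXY i with h | h
        exacts [h hXi, h hYi]
      · by_cases hX1z : X1 = 0
        · have hY1z : Y1 = 0 := dg_eq_zero ha0 (by rw [← hor', hX1z, dg_zero])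
          obtain ⟨i, hi⟩ := hI1
          have hXi : X i = 0 := by
            have := congrFun hXc i
            have h1 := hX2In i hi
            have h2 := congrFun hX1z i
            simp only [Pi.add_apply, Pi.zero_apply] at this h2
            omega
          have hYi : Y i = 0 := by
            have := congrFun hYc i
            have h1 := hY2In i hi
            have h2 := congrFun hY1z i
            simp only [Pi.add_apply, Pi.zero_apply] at this h2
            omega
          rcases hfullXY i with h | h
          exacts [h hXi, h hYi]
        · by_cases hXY1 : X1 = Y1
          · obtain ⟨i, hi⟩ := Function.ne_iff.mp hX1z
            simp only [Pi.zero_apply] at hi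
            have hXi : X i ≠ 0 := by
              have := congrFun hXc i
              simp only [Pi.add_apply] at this
              omega
            have hYi : Y i ≠ 0 := by
              have h1 := congrFun hXY1 i
              have := congrFun hYc i
              simp only [Pi.add_apply] at this
              omega
            rcases hdisjXY i with h | h
            exacts [hXi h, hYi h]
          · have hge := hmin X1 Y1 hXY1 hor'
            have h1 : wtd (dg a X1) + wtd (dg a X2) = Wstar := by
              rw [← wtd_add, hdX, hwtX]
            have h2 := wtd_dg_pos ha0 hX2z
            omega
    · have hc0 : c ≠ 0 := fun h => hmc (by rw [h, smul_zero])
      have hmn' : mn' ≠ 0 := fun h => hmc (by rw [h, zero_smul])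
      obtain ⟨γ1, hγ1supp, hγ1deg⟩ := hcf1
      obtain ⟨γ2, hγ2supp, hγ2deg⟩ := hcf2
      have hγ10 : γ1 ≠ 0 := fun h => hc0 (by rw [← hγ1deg, h, dg_zero])
      have hγ20 : γ2 ≠ 0 := fun h => hc0 (by rw [← hγ2deg, h, dg_zero])
      have hγ1I : ∀ i, ¬ I i → γ1 i = 0 := by
        intro i hi
        have := congrFun hγ1supp i
        rw [rst_apply_of_not I γ1 hi] at this
        exact this.symm
      have hγ2I : ∀ i, I i → γ2 i = 0 := by
        intro i hi
        have := congrFun hγ2supp i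
        rw [rst_apply_of_not _ γ2 (by simpa using hi)] at this
        exact this.symm
      have hwtY : wtd (dg a Y) = Wstar := by rw [← hfibXY]; exact hwtX
      -- first exchange: X2 = 0
      set w1 : Fin n → ℕ := Y1 + (X2 + mn' • γ2) with hw1def
      have hdw1 : dg a w1 = dg a X := by
        rw [hw1def, dg_add, dg_add, dg_nsmul, hγ2deg, ← hdX, hor']
        ring
      have hw1X : w1 ≠ X := by
        obtain ⟨i, hi⟩ := Function.ne_iff.mp hγ20
        simp only [Pi.zero_apply] at hi
        have hIi : ¬ I i := fun h => hi (hγ2I i h)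
        intro h
        have h1 := congrFun h i
        have h2 := congrFun hXc i
        have h3 := hY1In i hIi
        have h4 := hX1In i hIi
        simp only [hw1def, Pi.add_apply, Pi.smul_apply, smul_eq_mul] at h1 h2
        have : mn' * γ2 i ≠ 0 := Nat.mul_ne_zero hmn' hi
        omega
      have hdisjw1 := hdisjmin X w1 (Ne.symm hw1X) hdw1.symm hwtX
      have hX2z : X2 = 0 := by
        funext i
        simp only [Pi.zero_apply]
        by_contra h
        have h2 := congrFun hXc i
        simp only [Pi.add_apply] at h2
        rcases hdisjw1 i with hh | hh
        · omega
        · simp only [hw1def, Pi.add_apply, Pi.smul_apply, smul_eq_mul] at hh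
          omega
      -- second exchange: Y1 = 0
      set w2 : Fin n → ℕ := Y1 + mn' • γ1 with hw2def
      have hdw2 : dg a w2 = dg a Y := by
        rw [hw2def, dg_add, dg_nsmul, hγ1deg, ← hor', ← hfibXY, ← hdX, hX2z, dg_zero,
          add_zero]
      have hw2Y : w2 ≠ Y := by
        obtain ⟨i, hi⟩ := Function.ne_iff.mp hγ10
        simp only [Pi.zero_apply] at hi
        have hIi : I i := by
          by_contra h
          exact hi (hγ1I i h)
        intro h
        have h1 := congrFun h i
        have h2 := congrFun hYc i
        have h3 := hY2In i hIi
        simp only [hw2def, Pi.add_apply, Pi.smul_apply, smul_eq_mul] at h1 h2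
        have : mn' * γ1 i ≠ 0 := Nat.mul_ne_zero hmn' hi
        omega
      have hdisjw2 := hdisjmin Y w2 (Ne.symm hw2Y) hdw2.symm hwtY
      have hY1z : Y1 = 0 := by
        funext i
        simp only [Pi.zero_apply]
        by_contra h
        have h2 := congrFun hYc i
        simp only [Pi.add_apply] at h2
        rcases hdisjw2 i with hh | hh
        · omega
        · simp only [hw2def, Pi.add_apply, Pi.smul_apply, smul_eq_mul] at hh
          omega
      -- degrees
      have hdgXmc : dg a X = mn' • c := by
        rw [← hdX, hX2z, dg_zero, add_zero, hor', hY1z, dg_zero, zero_add]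
      -- fullness of X on I and of Y on the complement
      have hXfull : ∀ i, I i → X i ≠ 0 := by
        intro i hi
        have hYi : Y i = 0 := by
          have := congrFun hYc i
          have h1 := congrFun hY1z i
          have h3 := hY2In i hi
          simp only [Pi.add_apply, Pi.zero_apply] at this h1
          omega
        rcases hfullXY i with h | h
        exacts [h, absurd hYi h]
      have hYfull : ∀ i, ¬ I i → Y i ≠ 0 := by
        intro i hi
        have hXi : X i = 0 := by
          have := congrFun hXc i
          have h1 := congrFun hX2z i
          have h3 := hX1In i hi
          simp only [Pi.add_apply, Pi.zero_apply] at this h1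
          omega
        rcases hfullXY i with h | h
        exacts [absurd hXi h, h]
      -- γ1 is full on I
      have hγ1full : ∀ i, I i → γ1 i ≠ 0 := by
        intro i hi
        have hdm : dg a (mn' • γ1) = dg a X := by rw [dg_nsmul, hγ1deg, hdgXmc]
        by_cases hEq : X = mn' • γ1
        · intro h0
          apply hXfull i hi
          have := congrFun hEq i
          simp only [Pi.smul_apply, smul_eq_mul] at this
          rw [this, h0, Nat.mul_zero]
        · exfalso
          have hd := hdisjmin X (mn' • γ1) hEq hdm.symm hwtX
          obtain ⟨j, hj⟩ := Function.ne_iff.mp hγ10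
          simp only [Pi.zero_apply] at hj
          have hIj : I j := by
            by_contra h
            exact hj (hγ1I j h)
          rcases hd j with hh | hh
          · exact hXfull j hIj hh
          · simp only [Pi.smul_apply, smul_eq_mul] at hh
            exact Nat.mul_ne_zero hmn' hj hh
      have hγ2full : ∀ i, ¬ I i → γ2 i ≠ 0 := by
        intro i hi
        have hdm : dg a (mn' • γ2) = dg a Y := by
          rw [dg_nsmul, hγ2deg, ← hfibXY, hdgXmc]
        by_cases hEq : Y = mn' • γ2
        · intro h0
          apply hYfull i hi
          have := congrFun hEq i
          simp only [Pi.smul_apply, smul_eq_mul] at this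
          rw [this, h0, Nat.mul_zero]
        · exfalso
          have hd := hdisjmin Y (mn' • γ2) hEq hdm.symm hwtY
          obtain ⟨j, hj⟩ := Function.ne_iff.mp hγ20
          simp only [Pi.zero_apply] at hj
          have hIj : ¬ I j := fun h => hj (hγ2I j h)
          rcases hd j with hh | hh
          · exact hYfull j hIj hh
          · simp only [Pi.smul_apply, smul_eq_mul] at hh
            exact Nat.mul_ne_zero hmn' hj hh
      exact ⟨hc0, ⟨γ1, hγ1supp, hγ1deg, hγ1full⟩, ⟨γ2, hγ2supp, hγ2deg, hγ2full⟩⟩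
  rcases hor with hO | hO
  · exact main U V hUV hdgUV hwtU hdisj hfullUV mn hO
  · exact main V U (Ne.symm hUV) hdgUV.symm (by rw [← hdgUV]; exact hwtU)
      (fun i => (hdisj i).symm) (fun i => (hfullUV i).symm) mn hO

/-- rational combinations of the generators -/
noncomputable def qcomb (aa : Fin n → Fin d → ℕ) (q : Fin n → ℚ) : Fin d → ℚ :=
  ∑ i, q i • natToQ (aa i)

lemma qcomb_apply (q : Fin n → ℚ) (j : Fin d) :
    qcomb a q j = ∑ i, q i * (a i j : ℚ) := by
  simp [qcomb, natToQ, Finset.sum_apply]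

lemma natToQ_dg (u : Fin n → ℕ) : natToQ (dg a u) = qcomb a (fun i => (u i : ℚ)) := by
  funext j
  simp only [natToQ, dg_apply, qcomb_apply]
  push_cast
  rfl

lemma natToQ_inj {x y : Fin d → ℕ} (h : natToQ x = natToQ y) : x = y := by
  funext j
  have := congrFun h j
  simp only [natToQ] at this
  exact_mod_cast this

lemma natToQ_ne_zero {x : Fin d → ℕ} (hx : x ≠ 0) : natToQ x ≠ 0 := by
  intro h
  apply hx
  funext j
  have := congrFun h j
  simp only [natToQ, Pi.zero_apply] at this ⊢
  exact_mod_cast this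

lemma qcomb_sub (q q' : Fin n → ℚ) : qcomb a (q - q') = qcomb a q - qcomb a q' := by
  funext j
  simp only [qcomb_apply, Pi.sub_apply, sub_mul, Finset.sum_sub_distrib]

lemma qcomb_add (q q' : Fin n → ℚ) : qcomb a (q + q') = qcomb a q + qcomb a q' := by
  funext j
  simp only [qcomb_apply, Pi.add_apply, add_mul, Finset.sum_add_distrib]

lemma qcomb_single (i₀ : Fin n) : qcomb a (Pi.single i₀ 1) = natToQ (a i₀) := by
  funext j
  rw [qcomb_apply]
  rw [Finset.sum_eq_single i₀]
  · simp [natToQ]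
  · intro i _ hi; simp [Pi.single_apply, hi]
  · intro h; exact absurd (Finset.mem_univ i₀) h

/-- a pseudo-Frobenius element forces a relation among the generators of one part -/
lemma pf_gives_relation
    (ha0 : ∀ i, a i ≠ 0)
    {A : Set (Fin d → ℕ)} (hA : A ⊆ Set.range a)
    {f : Fin d → ℕ} (hf : f ∈ PF (AddSubmonoid.closure A)) :
    ∃ u v : Fin n → ℕ, u ≠ v ∧ (∀ i, u i ≠ 0 → a i ∈ A) ∧
      (∀ i, v i ≠ 0 → a i ∈ A) ∧ dg a u = dg a v := by
  classical
  obtain ⟨⟨hfcone, hfS⟩, hfadd⟩ := hf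
  -- express f as a nonnegative rational combination of the generators in A
  obtain ⟨m, lam, sv, hlam, hsv, hcone⟩ := hfcone
  have hrep : ∀ t : Fin m, ∃ u : Fin n → ℕ, (∀ i, u i ≠ 0 → a i ∈ A) ∧ dg a u = sv t :=
    fun t => (mem_closure_iff_coeff a A hA (sv t)).mp (hsv t)
  choose uu huu hduu using hrep
  set q : Fin n → ℚ := fun i => ∑ t, lam t * (uu t i) with hqdef
  have hq0 : ∀ i, 0 ≤ q i := by
    intro i
    apply Finset.sum_nonneg
    intro t _
    have := hlam t
    positivity
  have hqsupp : ∀ i, q i ≠ 0 → a i ∈ A := by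
    intro i hqi
    by_contra hiA
    apply hqi
    rw [hqdef]
    apply Finset.sum_eq_zero
    intro t _
    have : uu t i = 0 := by
      by_contra h
      exact hiA (huu t i h)
    rw [this]
    simp
  have hfq : natToQ f = qcomb a q := by
    rw [hcone]
    funext j
    rw [Finset.sum_apply, qcomb_apply]
    have : ∀ t : Fin m, (lam t • natToQ (sv t)) j = ∑ i, lam t * (uu t i) * (a i j : ℚ) := by
      intro t
      rw [← hduu t, natToQ_dg]
      simp only [Pi.smul_apply, smul_eq_mul, qcomb_apply, Finset.mul_sum]
      exact Finset.sum_congr rfl fun i _ => by ring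
    rw [Finset.sum_congr rfl fun t _ => this t, Finset.sum_comm]
    refine Finset.sum_congr rfl fun i _ => ?_
    rw [hqdef]
    simp only [Finset.sum_mul]
  -- main dichotomy
  by_cases hex : ∃ u v : Fin n → ℕ, u ≠ v ∧ (∀ i, u i ≠ 0 → a i ∈ A) ∧
      (∀ i, v i ≠ 0 → a i ∈ A) ∧ dg a u = dg a v
  · exact hex
  exfalso
  -- independence
  have hind : ∀ r : Fin n → ℚ, (∀ i, r i ≠ 0 → a i ∈ A) → qcomb a r = 0 → r = 0 := by
    intro r hrsupp hrcomb
    by_contra hr0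
    set N : ℕ := ∏ i, (r i).den with hNdef
    have hNne : (N : ℚ) ≠ 0 := by
      rw [hNdef]
      push_cast
      apply Finset.prod_ne_zero_iff.mpr
      intro i _
      exact_mod_cast (r i).den_nz
    have hdvd : ∀ i, (r i).den ∣ N := fun i => Finset.dvd_prod_of_mem _ (Finset.mem_univ i)
    set K : Fin n → ℕ := fun i => N / (r i).den with hKdef
    have hKden : ∀ i, (r i).den * K i = N := fun i => Nat.mul_div_cancel' (hdvd i)
    set z : Fin n → ℤ := fun i => (r i).num * (K i : ℤ) with hzdef
    have hz : ∀ i, (z i : ℚ) = r i * N := by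
      intro i
      have hden : ((r i).den : ℚ) ≠ 0 := by exact_mod_cast (r i).den_nz
      have hKN : ((r i).den : ℚ) * (K i : ℚ) = (N : ℚ) := by exact_mod_cast hKden i
      have h1 : (z i : ℚ) = ((r i).num : ℚ) * (K i : ℚ) := by
        simp only [hzdef]; push_cast; ring
      have h2 : ((r i).num : ℚ) = r i * ((r i).den : ℚ) :=
        (div_eq_iff hden).mp (Rat.num_div_den (r i))
      rw [h1, ← hKN, h2]
      ring
    set u : Fin n → ℕ := fun i => (z i).toNat with hudef
    set v : Fin n → ℕ := fun i => (-(z i)).toNat with hvdef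
    have hzuv : ∀ i, z i = (u i : ℤ) - (v i : ℤ) := by
      intro i
      rw [hudef, hvdef]
      simp only
      omega
    have hdguv : dg a u = dg a v := by
      funext j
      have hcoord := congrFun hrcomb j
      rw [qcomb_apply] at hcoord
      have hQ : ∑ i, (z i : ℚ) * (a i j : ℚ) = 0 := by
        have : ∑ i, (z i : ℚ) * (a i j : ℚ) = (∑ i, r i * (a i j : ℚ)) * N := by
          rw [Finset.sum_mul]
          refine Finset.sum_congr rfl fun i _ => ?_
          rw [hz i]; ring
        rw [this, hcoord]
        simp
      have hQ' : ∑ i, ((u i : ℚ) - (v i : ℚ)) * (a i j : ℚ) = 0 := by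
        rw [← hQ]
        refine Finset.sum_congr rfl fun i _ => ?_
        have := hzuv i
        have hcast : (z i : ℚ) = (u i : ℚ) - (v i : ℚ) := by
          rw [this]; push_cast; ring
        rw [hcast]
      have : (∑ i, (u i : ℚ) * (a i j : ℚ)) = ∑ i, (v i : ℚ) * (a i j : ℚ) := by
        have hsub := hQ'
        simp only [sub_mul, Finset.sum_sub_distrib] at hsub
        linarith
      have hN : ((dg a u j : ℕ) : ℚ) = ((dg a v j : ℕ) : ℚ) := by
        rw [dg_apply, dg_apply]
        push_cast
        exact this
      exact_mod_cast hN
    have husupp : ∀ i, u i ≠ 0 → a i ∈ A := by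
      intro i hi
      apply hrsupp i
      intro hri
      apply hi
      have hz0 : z i = 0 := by simp [hzdef, hri]
      simp only [hudef]
      omega
    have hvsupp : ∀ i, v i ≠ 0 → a i ∈ A := by
      intro i hi
      apply hrsupp i
      intro hri
      apply hi
      have hz0 : z i = 0 := by simp [hzdef, hri]
      simp only [hvdef]
      omega
    have huv : u ≠ v := by
      obtain ⟨i, hri⟩ := Function.ne_iff.mp hr0
      simp only [Pi.zero_apply] at hri
      have hKne : K i ≠ 0 := by
        intro h
        apply hNne
        rw [← hKden i, h]
        simp
      have hzi : z i ≠ 0 := by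
        simp only [hzdef]
        apply mul_ne_zero
        · exact_mod_cast Rat.num_ne_zero.mpr hri
        · exact_mod_cast hKne
      intro h
      have := congrFun h i
      simp only [hudef, hvdef] at this
      omega
    exact hex ⟨u, v, huv, husupp, hvsupp, hdguv⟩
  -- f is not an ℕ-combination, so some coefficient is not a natural number
  have hnotall : ¬ ∀ i, ∃ t : ℕ, q i = t := by
    intro hall
    choose tt htt using hall
    apply hfS
    rw [mem_closure_iff_coeff a A hA]
    refine ⟨tt, fun i hi => hqsupp i (by rw [htt i]; exact_mod_cast hi), ?_⟩
    apply natToQ_inj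
    have hqt : q = fun i => ((tt i : ℕ) : ℚ) := by
      funext i
      rw [htt i]
    rw [hfq, natToQ_dg, hqt]
  push_neg at hnotall
  obtain ⟨i₀, hi₀⟩ := hnotall
  have hq0i : q i₀ ≠ 0 := fun h => hi₀ 0 (by rw [h]; simp)
  have hi₀A : a i₀ ∈ A := hqsupp i₀ hq0i
  by_cases hcase : ∃ i₁, a i₁ ∈ A ∧ i₁ ≠ i₀
  · obtain ⟨i₁, hi₁A, hi₁0⟩ := hcase
    have hfa : f + a i₁ ∈ AddSubmonoid.closure A := by
      apply hfadd
      · exact AddSubmonoid.subset_closure hi₁A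
      · exact ha0 i₁
    obtain ⟨w, hwsupp, hwd⟩ := (mem_closure_iff_coeff a A hA _).mp hfa
    have heq : qcomb a ((q + Pi.single i₁ 1) - fun i => (w i : ℚ)) = 0 := by
      rw [qcomb_sub, qcomb_add, qcomb_single]
      have h1 : qcomb a (fun i => (w i : ℚ)) = natToQ (dg a w) := (natToQ_dg w).symm
      rw [h1, hwd]
      have h2 : natToQ (f + a i₁) = natToQ f + natToQ (a i₁) := by
        funext j; simp [natToQ]
      rw [h2, ← hfq]
      ring
    have hr := hind _ ?_ heq
    · have := congrFun hr i₀
      simp only [Pi.sub_apply, Pi.add_apply, Pi.zero_apply,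
        Pi.single_apply, if_neg (Ne.symm hi₁0)] at this
      exact hi₀ (w i₀) (by linarith [this])
    · intro i hi
      simp only [Pi.sub_apply, Pi.add_apply, Pi.single_apply] at hi
      by_cases h1 : q i ≠ 0
      · exact hqsupp i h1
      · push_neg at h1
        by_cases h2 : i = i₁
        · subst h2; exact hi₁A
        · have h3 : w i ≠ 0 := by
            intro h4
            apply hi
            rw [h1, h4, if_neg h2]
            simp
          exact hwsupp i h3
  · push_neg at hcase
    have hall : ∀ i, a i ∈ A → i = i₀ := fun i hi => by
      by_contra h
      exact h (hcase i hi)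
    have hfa : f + a i₀ ∈ AddSubmonoid.closure A := by
      apply hfadd
      · exact AddSubmonoid.subset_closure hi₀A
      · exact ha0 i₀
    obtain ⟨w, hwsupp, hwd⟩ := (mem_closure_iff_coeff a A hA _).mp hfa
    have hqsing : qcomb a q = q i₀ • natToQ (a i₀) := by
      rw [qcomb]
      rw [Finset.sum_eq_single i₀]
      · intro i _ hi
        have : q i = 0 := by
          by_contra h
          exact hi (hall i (hqsupp i h))
        rw [this, zero_smul]
      · intro h; exact absurd (Finset.mem_univ i₀) h
    have hwsing : qcomb a (fun i => (w i : ℚ)) = (w i₀ : ℚ) • natToQ (a i₀) := by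
      rw [qcomb]
      rw [Finset.sum_eq_single i₀]
      · intro i _ hi
        have : w i = 0 := by
          by_contra h
          exact hi (hall i (hwsupp i h))
        rw [this]
        simp
      · intro h; exact absurd (Finset.mem_univ i₀) h
    have heq : (q i₀ + 1) • natToQ (a i₀) = (w i₀ : ℚ) • natToQ (a i₀) := by
      have h2 : natToQ (f + a i₀) = natToQ f + natToQ (a i₀) := by
        funext j; simp [natToQ]
      have h3 : natToQ f + natToQ (a i₀) = qcomb a (fun i => (w i : ℚ)) := by
        rw [← h2, ← hwd, natToQ_dg]
      rw [hfq, hqsing] at h3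
      rw [add_smul, one_smul]
      rw [h3, hwsing]
    have hA0 : natToQ (a i₀) ≠ 0 := natToQ_ne_zero (ha0 i₀)
    have hqi : q i₀ + 1 = (w i₀ : ℚ) := by
      have := sub_eq_zero.mpr heq
      rw [← sub_smul] at this
      rcases smul_eq_zero.mp this with h | h
      · linarith [sub_eq_zero.mp (by linarith [h] : q i₀ + 1 - (w i₀:ℚ) = 0)]
      · exact absurd h hA0
    have hw1 : w i₀ ≠ 0 := by
      intro h
      rw [h] at hqi
      push_cast at hqi
      have := hq0 i₀
      linarith
    apply hi₀ (w i₀ - 1)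
    have : ((w i₀ - 1 : ℕ) : ℚ) = (w i₀ : ℚ) - 1 := by
      have : 1 ≤ w i₀ := Nat.one_le_iff_ne_zero.mpr hw1
      push_cast [this]
      ring
    rw [this]
    linarith

end Core

end GNG

/-- For `n ≥ 3`, the toric ideal of a gluing of semigroups with
non-empty sets of pseudo-Frobenius elements is not generic. -/
theorem gluing_not_generic (k : Type*) [Field k] {n d : ℕ} (hn : 3 ≤ n)
    (S S₁ S₂ : AddSubmonoid (Fin d → ℕ)) (c : Fin d → ℕ)
    (a : Fin n → Fin d → ℕ) (hmin : MinGen a S)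
    (hglue : IsGluing S S₁ S₂ c)
    (h1 : (PF S₁).Nonempty) (h2 : (PF S₂).Nonempty) :
    ¬ IsGeneric k a := by
  classical
  rintro ⟨G, hGbin, hGspan, -⟩
  obtain ⟨A₁, A₂, -, -, hA₁ne, hA₂ne, hdisj, hminAB, hS₁, hS₂⟩ := hglue.exists_partition
  -- the two minimal generating sets coincide
  have hrange : Set.range a = A₁ ∪ A₂ := GNG.MinGen.unique hmin.2 hminAB
  have hA₁range : A₁ ⊆ Set.range a := by rw [hrange]; exact Set.subset_union_left
  have hA₂range : A₂ ⊆ Set.range a := by rw [hrange]; exact Set.subset_union_right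
  have ha0 : ∀ i, a i ≠ 0 := by
    intro i h
    exact GNG.MinGen.zero_not_mem hmin.2 (h ▸ Set.mem_range_self i)
  set I : Fin n → Prop := fun i => a i ∈ A₁ with hIdef
  have hInot : ∀ i, ¬ I i → a i ∈ A₂ := by
    intro i hi
    have : a i ∈ A₁ ∪ A₂ := hrange ▸ Set.mem_range_self i
    rcases this with h | h
    exacts [absurd h hi, h]
  have hI2not : ∀ i, a i ∈ A₂ → ¬ I i := by
    intro i hi hI
    exact Set.disjoint_left.mp hdisj hI hi
  have hI1 : ∃ i, I i := by
    obtain ⟨x, hx⟩ := hA₁ne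
    obtain ⟨i, rfl⟩ := hA₁range hx
    exact ⟨i, hx⟩
  have hI2 : ∃ i, ¬ I i := by
    obtain ⟨x, hx⟩ := hA₂ne
    obtain ⟨i, rfl⟩ := hA₂range hx
    exact ⟨i, hI2not i hx⟩
  -- membership of restricted degrees in the parts
  have hmem1 : ∀ x : Fin n → ℕ, GNG.dg a (GNG.rst I x) ∈ S₁ := by
    intro x
    rw [hS₁]
    rw [GNG.mem_closure_iff_coeff a A₁ hA₁range]
    refine ⟨GNG.rst I x, ?_, rfl⟩
    intro i hi
    by_contra h
    exact hi (GNG.rst_apply_of_not I x h)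
  have hmem2 : ∀ x : Fin n → ℕ, GNG.dg a (GNG.rst (fun i => ¬ I i) x) ∈ S₂ := by
    intro x
    rw [hS₂]
    rw [GNG.mem_closure_iff_coeff a A₂ hA₂range]
    refine ⟨GNG.rst (fun i => ¬ I i) x, ?_, rfl⟩
    intro i hi
    have hIi : ¬ I i := by
      by_contra h
      exact hi (GNG.rst_apply_of_not _ x (by simpa using h))
    exact hInot i hIi
  -- the splitting property coming from the gluing
  have hsplit : ∀ x y : Fin n → ℕ, GNG.dg a x = GNG.dg a y → ∃ mn : ℕ,
      GNG.dg a (GNG.rst I x) = GNG.dg a (GNG.rst I y) + mn • c ∨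
      GNG.dg a (GNG.rst I y) = GNG.dg a (GNG.rst I x) + mn • c := by
    intro x y hxy
    set P := GNG.dg a (GNG.rst I x) with hP
    set Q := GNG.dg a (GNG.rst I y) with hQ
    set P₂ := GNG.dg a (GNG.rst (fun i => ¬ I i) x) with hP₂
    set Q₂ := GNG.dg a (GNG.rst (fun i => ¬ I i) y) with hQ₂
    have hsum : P + P₂ = Q + Q₂ := by
      rw [hP, hP₂, hQ, hQ₂, GNG.dg_rst_compl, GNG.dg_rst_compl, hxy]
    have hw1 : natToZ P - natToZ Q ∈ grpOf S₁ := by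
      apply sub_mem
      · exact AddSubgroup.subset_closure (Set.mem_image_of_mem _ (hmem1 x))
      · exact AddSubgroup.subset_closure (Set.mem_image_of_mem _ (hmem1 y))
    have heq2 : natToZ P - natToZ Q = natToZ Q₂ - natToZ P₂ := by
      funext j
      have := congrFun hsum j
      simp only [Pi.add_apply] at this
      simp only [Pi.sub_apply, natToZ]
      omega
    have hw2 : natToZ P - natToZ Q ∈ grpOf S₂ := by
      rw [heq2]
      apply sub_mem
      · exact AddSubgroup.subset_closure (Set.mem_image_of_mem _ (hmem2 y))
      · exact AddSubgroup.subset_closure (Set.mem_image_of_mem _ (hmem2 x))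
    have hwmem : natToZ P - natToZ Q ∈ grpOf S₁ ⊓ grpOf S₂ := ⟨hw1, hw2⟩
    rw [hglue.grp] at hwmem
    obtain ⟨m, hm⟩ := AddSubgroup.mem_zmultiples_iff.mp hwmem
    rcases le_or_gt 0 m with hm0 | hm0
    · refine ⟨m.toNat, Or.inl ?_⟩
      funext j
      have h := congrFun hm j
      simp only [Pi.sub_apply, natToZ, Pi.smul_apply, smul_eq_mul] at h
      simp only [Pi.add_apply, Pi.smul_apply, smul_eq_mul]
      have hZ : (P j : ℤ) = (Q j : ℤ) + ((m.toNat * c j : ℕ) : ℤ) := by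
        push_cast
        rw [Int.toNat_of_nonneg hm0]
        linarith
      exact_mod_cast hZ
    · refine ⟨(-m).toNat, Or.inr ?_⟩
      funext j
      have h := congrFun hm j
      simp only [Pi.sub_apply, natToZ, Pi.smul_apply, smul_eq_mul] at h
      simp only [Pi.add_apply, Pi.smul_apply, smul_eq_mul]
      have hZ : (Q j : ℤ) = (P j : ℤ) + (((-m).toNat * c j : ℕ) : ℤ) := by
        push_cast
        rw [Int.toNat_of_nonneg (by omega : (0:ℤ) ≤ -m)]
        linarith
      exact_mod_cast hZ
  -- factorizations of c on either side
  have hcf1 : ∃ γ : Fin n → ℕ, GNG.rst I γ = γ ∧ GNG.dg a γ = c := by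
    have := hglue.mem₁
    rw [hS₁, GNG.mem_closure_iff_coeff a A₁ hA₁range] at this
    obtain ⟨γ, hγs, hγd⟩ := this
    refine ⟨γ, ?_, hγd⟩
    rw [GNG.rst_eq_self_iff]
    intro i hi
    by_contra h
    exact hi (hγs i h)
  have hcf2 : ∃ γ : Fin n → ℕ, GNG.rst (fun i => ¬ I i) γ = γ ∧ GNG.dg a γ = c := by
    have := hglue.mem₂
    rw [hS₂, GNG.mem_closure_iff_coeff a A₂ hA₂range] at this
    obtain ⟨γ, hγs, hγd⟩ := this
    refine ⟨γ, ?_, hγd⟩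
    rw [GNG.rst_eq_self_iff]
    intro i hi
    simp only [not_not] at hi
    by_contra h
    exact hI2not i (hγs i h) hi
  -- generator pairs
  have hrep : ∀ g ∈ G, ∃ U V : Fin n → ℕ, GNG.GoodPair a g U V := by
    intro g hg
    obtain ⟨u, v, hguv, hfull⟩ := hGbin g hg
    refine ⟨u, v, hguv, hfull, ?_⟩
    have hmem : binom k u v ∈ toricIdeal k a := by
      rw [← hGspan, ← hguv]
      exact Ideal.subset_span hg
    exact (GNG.binom_mem_toricIdeal_iff a u v).mp hmem
  -- the relation coming from the pseudo-Frobenius element of S₁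
  obtain ⟨f, hf⟩ := h1
  rw [hS₁] at hf
  obtain ⟨u0, v0, hne0, hu0s, hv0s, hfib0⟩ := GNG.pf_gives_relation ha0 hA₁range hf
  have hu0r : GNG.rst I u0 = u0 := by
    rw [GNG.rst_eq_self_iff]
    intro i hi
    by_contra h
    exact hi (hu0s i h)
  have hv0r : GNG.rst I v0 = v0 := by
    rw [GNG.rst_eq_self_iff]
    intro i hi
    by_contra h
    exact hi (hv0s i h)
  -- stage 1: structure of the minimal relation degree
  obtain ⟨hc0, ⟨γ₁, hγ₁supp, hγ₁deg, hγ₁full⟩, ⟨γ₂, hγ₂supp, hγ₂deg, hγ₂full⟩⟩ :=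
    GNG.stage1 ha0 hI1 hI2 hsplit hGspan hrep hcf1 hcf2 hne0 hfib0
  -- the main claim
  have hrel := GNG.claim_rel ha0 hc0 hI1 hI2 hγ₁supp hγ₁deg hγ₁full hγ₂supp hγ₂deg
    hγ₂full hsplit hGspan hrep (GNG.wtd (GNG.dg a u0) + 1) u0 v0 hfib0 (by omega)
  obtain ⟨⟨α, β, hconj⟩, -⟩ := hrel
  rw [hu0r, hv0r] at hconj
  have hdg := congrArg (GNG.dg a) hconj
  simp only [GNG.dg_add, GNG.dg_nsmul] at hdg
  rw [hγ₁deg, hfib0] at hdg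
  have hab : α = β := GNG.nsmul_cancel_of_ne_zero hc0 (add_left_cancel hdg)
  subst hab
  exact hne0 (add_right_cancel hconj)
end
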